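/- arXiv:1910.06103 — 5 statements merged into one kernel-verified Lean document; each statement's English description precedes it below -/
import Mathlib

section
/- For every m ≥ 1, there are exactly two nondegenerate monotone maps σ: [k] × [l]^op → [1] with k + l = 2m − 2 and k, l ≥ 0: one with (k, l) = (m−1, m) given by σ(i,j) = 1 iff i ≥ j, and one with (k, l) = (m, m−1) given by σ(i,j) = 1 iff i > j. -/
/-!
A monotone `σ : [k] × [l]ᵒᵖ → [1]` is a staircase: row `i` is `1` exactly on the columns
`j < c i`, where `c i` counts the ones in row `i`, and `c` is monotone. Distinct consecutive rows
mean that `c` is strictly monotone, distinct consecutive columns `j, j + 1` mean that `j + 1` is a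
value of `c`. So `c` embeds `k + 1` points into `{0, …, l + 1}` and covers `{1, …, l}`, whence
`l - 1 ≤ k ≤ l + 1`. When `k + l` is odd this leaves `k = l ∓ 1`, and in both cases the values of
`c` are forced: `c i = i + 1`, resp. `c i = i`.
-/

def Mono2 {k l : ℕ} (σ : Fin (k + 1) → Fin (l + 1) → Fin 2) : Prop :=
  ∀ i i' j j', i ≤ i' → j' ≤ j → σ i j ≤ σ i' j'

def Nondeg {k l : ℕ} (σ : Fin (k + 1) → Fin (l + 1) → Fin 2) : Prop :=
  (∀ i : Fin k, (fun j => σ i.castSucc j) ≠ (fun j => σ i.succ j)) ∧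
  (∀ j : Fin l, (fun i => σ i j.castSucc) ≠ (fun i => σ i j.succ))

open Finset

theorem Fin.lt_card_filter_iff {n : ℕ} {p : Fin n → Prop} [DecidablePred p]
    (hp : ∀ ⦃i j⦄, i ≤ j → p j → p i) (j : Fin n) : p j ↔ (j : ℕ) < #{i | p i} := by
  constructor
  · intro hj
    calc (j : ℕ) < #(Iic j) := by rw [Fin.card_Iic]; omega
      _ ≤ #{i | p i} := card_le_card fun i hi => by
          simp only [mem_Iic] at hi; simpa using hp hi hj
  · intro hlt
    by_contra hj
    have hsub : ({i | p i} : Finset (Fin n)) ⊆ Iio j := fun i hi => by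
      simp only [mem_filter, mem_univ, true_and] at hi
      exact mem_Iio.2 (lt_of_not_ge fun hji => hj (hp hji hi))
    have := card_le_card hsub
    rw [Fin.card_Iio] at this
    omega

theorem StrictMono.eq_add_val_of_bounds {n a : ℕ} {f : Fin (n + 1) → ℕ} (hf : StrictMono f)
    (ha : ∀ i, a ≤ f i) (hb : ∀ i, f i ≤ a + n) (i : Fin (n + 1)) : f i = a + i := by
  let g : Fin (n + 1) → Fin (n + 1) := fun i => ⟨f i - a, by have := ha i; have := hb i; omega⟩
  have hg : StrictMono g := fun i i' h => by
    have := hf h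
    have := ha i
    simp only [g, Fin.mk_lt_mk]
    omega
  have := congrArg Fin.val (hg.apply_eq (x := i))
  simp only [g] at this
  have := ha i
  omega

theorem StrictMono.eq_val_add_one_or_eq_val {k l : ℕ} {c : Fin (k + 1) → ℕ} (hc : StrictMono c)
    (hle : ∀ i, c i ≤ l + 1) (hcover : ∀ j : Fin l, ∃ i, c i = j + 1) (hkl : k ≠ l) :
    (l = k + 1 ∧ ∀ i, c i = i + 1) ∨ (k = l + 1 ∧ ∀ i, c i = i) := by
  have hcard : #(univ.image c) = k + 1 := by
    rw [card_image_of_injective _ hc.injective, card_univ, Fintype.card_fin]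
  have hcover' : Icc 1 l ⊆ univ.image c := fun x hx => by
    rw [mem_Icc] at hx
    obtain ⟨i, hi⟩ := hcover ⟨x - 1, by omega⟩
    exact mem_image.2 ⟨i, mem_univ i, by rw [hi]; show x - 1 + 1 = x; omega⟩
  have hupper : k + 1 ≤ l + 2 := by
    simpa using card_le_card_of_injOn c (s := univ) (t := range (l + 2))
      (fun i _ => mem_range.2 (Nat.lt_succ_of_le (hle i))) hc.injective.injOn
  have hlower : l ≤ k + 1 := by simpa [hcard] using card_le_card hcover'
  obtain hl | hk : l = k + 1 ∨ k = l + 1 := by omega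
  · have himage : Icc 1 l = univ.image c :=
      eq_of_subset_of_card_le hcover' (by rw [hcard, Nat.card_Icc]; omega)
    have hmem (i : Fin (k + 1)) : c i ∈ Icc 1 l := himage ▸ mem_image_of_mem c (mem_univ i)
    refine Or.inl ⟨hl, fun i => ?_⟩
    rw [hc.eq_add_val_of_bounds (a := 1) (fun i => (mem_Icc.1 (hmem i)).1)
      (fun i => by have := (mem_Icc.1 (hmem i)).2; omega) i, add_comm]
  · exact Or.inr ⟨hk, fun i => by
      simpa using hc.eq_add_val_of_bounds (a := 0) (fun _ => Nat.zero_le _)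
        (fun i => by have := hle i; omega) i⟩

def staircase {k l : ℕ} (c : Fin (k + 1) → ℕ) : Fin (k + 1) → Fin (l + 1) → Fin 2 :=
  fun i j => if (j : ℕ) < c i then 1 else 0

section Staircase

variable {k l : ℕ} {c : Fin (k + 1) → ℕ}

theorem mono2_staircase (hc : Monotone c) : Mono2 (staircase (l := l) c) := by
  intro i i' j j' hi hj
  have := hc hi
  have : (j' : ℕ) ≤ j := hj
  simp only [staircase]
  split_ifs <;> first | exact le_rfl | omega

theorem staircase_row_eq_iff {i i' : Fin (k + 1)} (hi : c i ≤ l + 1) (hi' : c i' ≤ l + 1) :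
    (fun j => staircase (l := l) c i j) = (fun j => staircase c i' j) ↔ c i = c i' := by
  refine ⟨fun h => ?_, fun h => by simp only [staircase, h]⟩
  by_contra hne
  have := congrFun h ⟨min (c i) (c i'), by omega⟩
  simp only [staircase] at this
  split_ifs at this <;> omega

theorem staircase_col_ne_iff (j : Fin l) :
    (fun i => staircase c i j.castSucc) ≠ (fun i => staircase c i j.succ) ↔
      ∃ i, c i = j + 1 := by
  refine ⟨fun h => ?_, fun ⟨i, hi⟩ h => by simpa [staircase, hi] using congrFun h i⟩
  by_contra hnone
  push Not at hnone
  refine h (funext fun i => ?_)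
  have := hnone i
  simp only [staircase, Fin.val_castSucc, Fin.val_succ]
  split_ifs <;> omega

theorem nondeg_staircase_iff (hc : Monotone c) (hle : ∀ i, c i ≤ l + 1) :
    Nondeg (staircase (l := l) c) ↔ StrictMono c ∧ ∀ j : Fin l, ∃ i, c i = j + 1 := by
  rw [Nondeg, Fin.strictMono_iff_lt_succ]
  refine and_congr (forall_congr' fun i => ?_) (forall_congr' staircase_col_ne_iff)
  rw [Ne, staircase_row_eq_iff (hle _) (hle _), (hc (Fin.castSucc_le_succ i)).lt_iff_ne]

end Staircase

def rowCount {k l : ℕ} (σ : Fin (k + 1) → Fin (l + 1) → Fin 2) (i : Fin (k + 1)) : ℕ :=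
  #{j | σ i j = 1}

theorem rowCount_le {k l : ℕ} (σ : Fin (k + 1) → Fin (l + 1) → Fin 2) (i : Fin (k + 1)) :
    rowCount σ i ≤ l + 1 :=
  (card_filter_le _ _).trans_eq (card_fin _)

namespace Mono2

variable {k l : ℕ} {σ : Fin (k + 1) → Fin (l + 1) → Fin 2}

theorem monotone_rowCount (hσ : Mono2 σ) : Monotone (rowCount σ) := fun i i' hi =>
  card_le_card fun j hj => by
    have := hσ i i' j j hi le_rfl
    simp only [mem_filter, mem_univ, true_and] at hj ⊢
    omega

theorem eq_staircase_rowCount (hσ : Mono2 σ) : σ = staircase (rowCount σ) := by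
  funext i j
  have hrow := Fin.lt_card_filter_iff (p := fun j => σ i j = 1)
    (fun j' j hj h => by have := hσ i i j j' le_rfl hj; omega) j
  simp only [staircase, rowCount, ← hrow]
  split_ifs <;> omega

end Mono2

/-- For `m = t + 1 ≥ 1` there are exactly two nondegenerate monotone maps
`σ : [k] × [l]ᵒᵖ → [1]` in even dimension `2m` (i.e. with `k + l = 2m - 1`):
one with `(k, l) = (m-1, m)` given by `σ(i,j) = 1 iff i ≥ j`, and one with
`(k, l) = (m, m-1)` given by `σ(i,j) = 1 iff i > j`. -/
theorem two_nondegenerate_simplices_even (t : ℕ) :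
    (∀ (k l : ℕ) (σ : Fin (k + 1) → Fin (l + 1) → Fin 2),
      k + l + 1 = 2 * (t + 1) → Mono2 σ → Nondeg σ →
        ((k = t ∧ l = t + 1 ∧ ∀ i j, σ i j = if (j : ℕ) ≤ (i : ℕ) then 1 else 0) ∨
         (k = t + 1 ∧ l = t ∧ ∀ i j, σ i j = if (j : ℕ) < (i : ℕ) then 1 else 0))) ∧
    (Mono2 (fun (i : Fin (t + 1)) (j : Fin (t + 2)) =>
        if (j : ℕ) ≤ (i : ℕ) then (1 : Fin 2) else 0) ∧
     Nondeg (fun (i : Fin (t + 1)) (j : Fin (t + 2)) =>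
        if (j : ℕ) ≤ (i : ℕ) then (1 : Fin 2) else 0)) ∧
    (Mono2 (fun (i : Fin (t + 2)) (j : Fin (t + 1)) =>
        if (j : ℕ) < (i : ℕ) then (1 : Fin 2) else 0) ∧
     Nondeg (fun (i : Fin (t + 2)) (j : Fin (t + 1)) =>
        if (j : ℕ) < (i : ℕ) then (1 : Fin 2) else 0)) := by
  have hle : (fun (i : Fin (t + 1)) (j : Fin (t + 2)) =>
      if (j : ℕ) ≤ (i : ℕ) then (1 : Fin 2) else 0) = staircase fun i => i + 1 := by
    funext i j
    simp only [staircase, Nat.lt_succ_iff]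
  have hlt : (fun (i : Fin (t + 2)) (j : Fin (t + 1)) =>
      if (j : ℕ) < (i : ℕ) then (1 : Fin 2) else 0) = staircase fun i => i := rfl
  have hsucc : StrictMono fun i : Fin (t + 1) => (i : ℕ) + 1 := fun _ _ h => Nat.succ_lt_succ h
  refine ⟨fun k l σ hkl hσ hnd => ?_, ?_, ?_⟩
  · rw [hσ.eq_staircase_rowCount,
      nondeg_staircase_iff hσ.monotone_rowCount (rowCount_le σ)] at hnd
    rw [hσ.eq_staircase_rowCount]
    rcases hnd.1.eq_val_add_one_or_eq_val (rowCount_le σ) hnd.2 (by omega) with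
      ⟨hl, hc⟩ | ⟨hk, hc⟩
    · exact Or.inl ⟨by omega, by omega, fun i j => by simp [staircase, hc]⟩
    · exact Or.inr ⟨by omega, by omega, fun i j => by simp [staircase, hc]⟩
  · rw [hle, nondeg_staircase_iff hsucc.monotone (fun i => by omega)]
    exact ⟨mono2_staircase hsucc.monotone, hsucc, fun j => ⟨j, rfl⟩⟩
  · rw [hlt, nondeg_staircase_iff Fin.val_strictMono.monotone (fun i => by omega)]
    exact ⟨mono2_staircase Fin.val_strictMono.monotone, Fin.val_strictMono,
      fun j => ⟨j.succ.castSucc, rfl⟩⟩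
end

section
/- Let n ≥ 2 and 0 ≤ k ≤ n−1. Every triangulation of a convex (n+1)-gon with vertices labeled 0,...,n, having no triangle with all three vertices in {0,...,k} and no triangle with all three vertices in {k+1,...,n}, contains exactly one of the two triangles (0, n−1, n) and (0, 1, n); in particular it contains no triangle (0, p, n) with 1 < p < n−1, i.e., the only triangles containing the edge (0,n) are (0,1,n) or (0,n−1,n). -/
/-- `(a, b)` is a diagonal (chord) of the convex `(n+1)`-gon with vertices
`0 < 1 < ... < n`: it joins two non-adjacent vertices and is not the
boundary edge `(0, n)`. -/
def IsChord (n a b : ℕ) : Prop :=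
  a + 1 < b ∧ b ≤ n ∧ ¬(a = 0 ∧ b = n)

/-- A triangulation of the convex `(n+1)`-gon with vertices `0 < 1 < ... < n`:
a maximal family of pairwise non-crossing diagonals, where `{a,c}` and `{b,d}`
with `a < b < c < d` cross. -/
structure Triangulation (n : ℕ) where
  diag : Finset (ℕ × ℕ)
  chords : ∀ p ∈ diag, IsChord n p.1 p.2
  noncross : ∀ p ∈ diag, ∀ q ∈ diag, ¬(p.1 < q.1 ∧ q.1 < p.2 ∧ p.2 < q.2)
  maximal : ∀ a b : ℕ, IsChord n a b → (a, b) ∉ diag →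
    ∃ p ∈ diag, (p.1 < a ∧ a < p.2 ∧ p.2 < b) ∨ (a < p.1 ∧ p.1 < b ∧ b < p.2)

/-- `a < b < c` span a triangle of the triangulation `T`: each of the three
sides is a boundary edge of the polygon or a diagonal of `T`. -/
def IsTriangle {n : ℕ} (T : Triangulation n) (a b c : ℕ) : Prop :=
  a < b ∧ b < c ∧ c ≤ n ∧
  (b = a + 1 ∨ (a = 0 ∧ b = n) ∨ (a, b) ∈ T.diag) ∧
  (c = b + 1 ∨ (b = 0 ∧ c = n) ∨ (b, c) ∈ T.diag) ∧
  (c = a + 1 ∨ (a = 0 ∧ c = n) ∨ (a, c) ∈ T.diag)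

/-- The triangulation `T` has no triangle with all vertices in `{0, ..., k}`
and no triangle with all vertices in `{k+1, ..., n}`. -/
def GoodTriangulation {n : ℕ} (k : ℕ) (T : Triangulation n) : Prop :=
  (∀ a b c : ℕ, IsTriangle T a b c → ¬ c ≤ k) ∧
  (∀ a b c : ℕ, IsTriangle T a b c → ¬ k + 1 ≤ a)

lemma exists_tri (n : ℕ) (T : Triangulation n) (a b : ℕ) (hab : a + 2 ≤ b) (hb : b ≤ n)
    (h : (a, b) ∈ T.diag ∨ (a = 0 ∧ b = n)) :
    ∃ m, a < m ∧ m < b ∧ IsTriangle T a m b := by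
  classical
  set S : Finset ℕ := (Finset.Ioo a b).filter (fun m => m = a + 1 ∨ (a, m) ∈ T.diag) with hS
  have hne : (a + 1) ∈ S := by
    simp [hS, Finset.mem_filter, Finset.mem_Ioo]; omega
  set m := S.max' ⟨a + 1, hne⟩ with hm
  have hmS : m ∈ S := S.max'_mem _
  obtain ⟨hmIoo, hmedge⟩ := Finset.mem_filter.mp hmS
  rw [Finset.mem_Ioo] at hmIoo
  obtain ⟨ham, hmb⟩ := hmIoo
  -- key: edge (m, b)
  have hedge : b = m + 1 ∨ (m, b) ∈ T.diag := by
    by_cases hbm : b = m + 1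
    · exact Or.inl hbm
    · right
      have hchord : IsChord n m b := ⟨by omega, hb, by omega⟩
      by_contra hnd
      obtain ⟨q, hq, hcase⟩ := T.maximal m b hchord hnd
      have hq2n : q.2 ≤ n := (T.chords q hq).2.1
      rcases hcase with ⟨h1, h2, h3⟩ | ⟨h1, h2, h3⟩
      · -- q.1 < m < q.2 < b
        have hq1a : ¬ q.1 < a := by
          intro hlt
          rcases h with hd | ⟨ha0, _⟩
          · exact T.noncross q hq (a, b) hd ⟨hlt, by omega, by omega⟩
          · omega
        have hq1a' : q.1 = a := by
          by_contra hne'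
          have hq1gt : a < q.1 := by omega
          have ham' : (a, m) ∈ T.diag := by
            rcases hmedge with h' | h'
            · omega
            · exact h'
          exact T.noncross (a, m) ham' q hq ⟨hq1gt, h1, h2⟩
        have hq2S : q.2 ∈ S := by
          refine Finset.mem_filter.mpr ⟨Finset.mem_Ioo.mpr ⟨by omega, h3⟩, Or.inr ?_⟩
          have : q = (a, q.2) := by rw [← hq1a']
          rwa [this] at hq
        have := S.le_max' q.2 hq2S
        omega
      · -- m < q.1 < b < q.2
        rcases h with hd | ⟨ha0, hbn⟩
        · exact T.noncross (a, b) hd q hq ⟨by omega, h2, h3⟩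
        · omega
  -- build the triangle
  refine ⟨m, ham, hmb, ham, hmb, hb, ?_, ?_, ?_⟩
  · rcases hmedge with h' | h'
    · exact Or.inl h'
    · exact Or.inr (Or.inr h')
  · rcases hedge with h' | h'
    · exact Or.inl h'
    · right; right
      exact h'
  · rcases h with hd | ⟨ha0, hbn⟩
    · exact Or.inr (Or.inr hd)
    · exact Or.inr (Or.inl ⟨ha0, hbn⟩)

lemma uniq_tri {n : ℕ} (T : Triangulation n) {p q : ℕ}
    (hp : IsTriangle T 0 p n) (hq : IsTriangle T 0 q n) : p = q := by
  by_contra hne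
  wlog hlt : p < q generalizing p q
  · exact this hq hp (Ne.symm hne) (by omega)
  obtain ⟨hp0, hpn, _, _, hpe, _⟩ := hp
  obtain ⟨hq0, hqn, _, hqe, _, _⟩ := hq
  have hpd : (p, n) ∈ T.diag := by
    rcases hpe with h | h | h
    · omega
    · omega
    · exact h
  have hqd : (0, q) ∈ T.diag := by
    rcases hqe with h | h | h
    · omega
    · omega
    · exact h
  exact T.noncross (0, q) hqd (p, n) hpd ⟨hp0, hlt, hqn⟩

/-- In a triangulation of the `(n+1)`-gon with no triangle contained in
`{0,...,k}` and none contained in `{k+1,...,n}`, the edge `(0, n)` lies in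
exactly one triangle `(0, p, n)`, and that triangle is `(0, 1, n)` or
`(0, n-1, n)`; i.e. there is no triangle `(0, p, n)` with `1 < p < n - 1`. -/
theorem unique_triangle_on_long_edge (n k : ℕ) (hn : 2 ≤ n) (hk : k ≤ n - 1)
    (T : Triangulation n) (hT : GoodTriangulation k T) :
    (∃! p : ℕ, IsTriangle T 0 p n) ∧
    (∀ p : ℕ, IsTriangle T 0 p n → p = 1 ∨ p = n - 1) := by
  obtain ⟨p, hp0, hpn, hptri⟩ := exists_tri n T 0 n (by omega) le_rfl (Or.inr ⟨rfl, rfl⟩)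
  constructor
  · exact ⟨p, hptri, fun q hq => uniq_tri T hq hptri⟩
  · intro q hq
    by_contra hcon
    push_neg at hcon
    obtain ⟨hq1, hqn1⟩ := hcon
    obtain ⟨hq0, hqlt, _, hqe1, hqe2, _⟩ := hq
    have hq1' : 1 < q := by
      rcases hqe1 with h | h | h
      · omega
      · omega
      · have := (T.chords _ h).1; omega
    have hqn' : q < n - 1 := by omega
    have hd1 : (0, q) ∈ T.diag := by
      rcases hqe1 with h | h | h
      · omega
      · omega
      · exact h
    have hd2 : (q, n) ∈ T.diag := by
      rcases hqe2 with h | h | h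
      · omega
      · omega
      · exact h
    rcases le_or_gt q k with hle | hgt
    · obtain ⟨m, _, _, htri⟩ := exists_tri n T 0 q (by omega) (by omega) (Or.inl hd1)
      exact hT.1 0 m q htri hle
    · obtain ⟨m, _, _, htri⟩ := exists_tri n T q n (by omega) le_rfl (Or.inl hd2)
      exact hT.2 q m n htri (by omega)
end

section
/- Let n ≥ 2 and 0 ≤ k ≤ n−1. There is a bijection between the set of triangulations of a convex (n+1)-gon with vertices 0,...,n that contain no triangle with all vertices in {0,...,k} and no triangle with all vertices in {k+1,...,n}, and the set of shuffles [n−1] → [k] × [n−1−k]^op (monotone lattice paths from (0, n−1−k) to (k, 0) in the grid [k] × [n−1−k]). In particular, the number of such triangulations is C(n−1, k). -/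
namespace TriShuffleAux

theorem tri_ext {n : ℕ} {T₁ T₂ : Triangulation n} (h : T₁.diag = T₂.diag) : T₁ = T₂ := by
  cases T₁ with
  | mk d c nc m =>
    cases T₂ with
    | mk d' c' nc' m' =>
      dsimp at h
      subst h
      rfl

/-- every diagonal has a triangle on its "inner" side -/
theorem exists_inner_triangle {n : ℕ} (T : Triangulation n) {a b : ℕ}
    (hab : (a, b) ∈ T.diag) : ∃ c, a < c ∧ c < b ∧ IsTriangle T a c b := by
  classical
  obtain ⟨h1, h2, h3⟩ := T.chords _ hab
  set s : Finset ℕ := (Finset.Ioo a b).filter (fun x => x = a + 1 ∨ (a, x) ∈ T.diag) with hs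
  have hne : (a+1) ∈ s := by
    rw [hs, Finset.mem_filter, Finset.mem_Ioo]
    exact ⟨⟨Nat.lt_succ_self a, h1⟩, Or.inl rfl⟩
  set c := s.max' ⟨_, hne⟩ with hc
  have hcs : c ∈ s := Finset.max'_mem _ _
  have hcmax : ∀ x ∈ s, x ≤ c := fun x hx => Finset.le_max' _ _ hx
  simp only [hs, Finset.mem_filter, Finset.mem_Ioo] at hcs
  obtain ⟨⟨hac, hcb⟩, hside⟩ := hcs
  refine ⟨c, hac, hcb, hac, hcb, h2, ?_, ?_, Or.inr (Or.inr hab)⟩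
  · rcases hside with h | h
    · exact Or.inl h
    · exact Or.inr (Or.inr h)
  · -- side (c, b)
    by_cases hcb1 : b = c + 1
    · exact Or.inl hcb1
    · have hchord : IsChord n c b := ⟨by omega, h2, by omega⟩
      by_cases hmem : (c, b) ∈ T.diag
      · exact Or.inr (Or.inr hmem)
      · exfalso
        obtain ⟨p, hp, hcross⟩ := T.maximal c b hchord hmem
        obtain ⟨hp1, hp2, hp3⟩ := T.chords p hp
        rcases hcross with ⟨hq1, hq2, hq3⟩ | ⟨hq1, hq2, hq3⟩
        · -- p.1 < c < p.2 < b
          rcases lt_trichotomy p.1 a with h' | h' | h'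
          · exact T.noncross p hp (a,b) hab ⟨h', by omega, by omega⟩
          · have hmem2 : p.2 ∈ s := by
              simp only [hs, Finset.mem_filter, Finset.mem_Ioo]
              refine ⟨⟨by omega, by omega⟩, Or.inr ?_⟩
              have : ((a, p.2) : ℕ × ℕ) = p := by
                rw [← h']
              rw [this]; exact hp
            have := hcmax _ hmem2; omega
          · rcases hside with h | h
            · omega
            · exact T.noncross (a,c) h p hp ⟨h', hq1, hq2⟩
        · exact T.noncross (a,b) hab p hp ⟨by omega, by omega, hq3⟩

theorem mem_side {n k : ℕ} (T : Triangulation n) (hT : GoodTriangulation k T) {x y : ℕ}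
    (h : (x, y) ∈ T.diag) : x ≤ k ∧ k < y := by
  obtain ⟨c, h1, h2, ht⟩ := exists_inner_triangle T h
  constructor
  · by_contra h'; exact hT.2 x c y ht (by omega)
  · by_contra h'; exact hT.1 x c y ht (by omega)

/-- nesting of noncrossing side-chords ordered by index -/
theorem nest {n k x y x' y' i i' : ℕ} (hx : x ≤ k) (hy : k < y) (hx' : x' ≤ k) (hy' : k < y')
    (e : x + n = y + i) (e' : x' + n = y' + i') (hii : i < i')
    (nc1 : ¬(x < x' ∧ x' < y ∧ y < y')) (nc2 : ¬(x' < x ∧ x < y' ∧ y' < y)) :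
    x ≤ x' ∧ y' ≤ y := by
  constructor
  · by_contra h
    have : ¬ (y' < y) := fun hyy => nc2 ⟨by omega, by omega, hyy⟩
    omega
  · by_contra h
    have : ¬ (x < x') := fun hxx => nc1 ⟨hxx, by omega, by omega⟩
    omega

def InExt (n k : ℕ) (T : Triangulation n) (x y : ℕ) : Prop :=
  (x, y) ∈ T.diag ∨ (x = 0 ∧ y = n) ∨ (x = k ∧ y = k + 1)

theorem noncross_ext {n k : ℕ} (T : Triangulation n) {x y x' y' : ℕ}
    (hx : x ≤ k) (hy : k < y) (hx' : x' ≤ k) (hy' : k < y') (hyn : y ≤ n) (hyn' : y' ≤ n)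
    (h : InExt n k T x y) (h' : InExt n k T x' y') :
    ¬(x < x' ∧ x' < y ∧ y < y') := by
  rcases h with h | ⟨rfl, rfl⟩ | ⟨rfl, rfl⟩
  · rcases h' with h' | ⟨rfl, rfl⟩ | ⟨rfl, rfl⟩
    · exact T.noncross _ h _ h'
    · omega
    · omega
  · omega
  · omega

theorem diag_index_inj {n k : ℕ} (T : Triangulation n) (hT : GoodTriangulation k T)
    {x y x' y' i : ℕ} (h : (x, y) ∈ T.diag) (h' : (x', y') ∈ T.diag)
    (e : x + n = y + i) (e' : x' + n = y' + i) : x = x' ∧ y = y' := by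
  obtain ⟨hx, hy⟩ := mem_side T hT h
  obtain ⟨hx', hy'⟩ := mem_side T hT h'
  rcases lt_trichotomy x x' with hlt | heq | hgt
  · exact absurd ⟨hlt, by omega, by omega⟩ (T.noncross (x,y) h (x',y') h')
  · omega
  · exact absurd ⟨hgt, by omega, by omega⟩ (T.noncross (x',y') h' (x,y) h)

theorem ext_side {n k : ℕ} (hn : 2 ≤ n) (hk : k ≤ n - 1) (T : Triangulation n)
    (hT : GoodTriangulation k T) {x y : ℕ} (h : InExt n k T x y) :
    x ≤ k ∧ k < y ∧ y ≤ n := by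
  rcases h with h | ⟨rfl, rfl⟩ | ⟨rfl, rfl⟩
  · obtain ⟨hx, hy⟩ := mem_side T hT h
    exact ⟨hx, hy, (T.chords _ h).2.1⟩
  · omega
  · omega

theorem ext_index_inj {n k : ℕ} (hn : 2 ≤ n) (hk : k ≤ n - 1) (T : Triangulation n)
    (hT : GoodTriangulation k T) {x y x' y' i : ℕ} (h : InExt n k T x y) (h' : InExt n k T x' y')
    (e : x + n = y + i) (e' : x' + n = y' + i) : x = x' ∧ y = y' := by
  rcases h with h | ⟨rfl, rfl⟩ | ⟨rfl, rfl⟩ <;>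
    rcases h' with h' | ⟨rfl, rfl⟩ | ⟨rfl, rfl⟩
  · exact diag_index_inj T hT h h' e e'
  · obtain ⟨c1, c2, c3⟩ := T.chords _ h
    simp only at c1 c2 c3
    omega
  · obtain ⟨c1, c2, c3⟩ := T.chords _ h
    simp only at c1 c2 c3
    omega
  · obtain ⟨c1, c2, c3⟩ := T.chords _ h'
    simp only at c1 c2 c3
    omega
  · omega
  · omega
  · obtain ⟨c1, c2, c3⟩ := T.chords _ h'
    simp only at c1 c2 c3
    omega
  · omega
  · omega

theorem exists_index {n k : ℕ} (hn : 2 ≤ n) (hk : k ≤ n - 1) (T : Triangulation n)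
    (hT : GoodTriangulation k T) {i : ℕ} (hi1 : 1 ≤ i) (hi2 : i + 2 ≤ n) :
    ∃ x y, (x, y) ∈ T.diag ∧ x + n = y + i := by
  classical
  by_contra hno
  push_neg at hno
  set P : ℕ → Prop := fun j => ∃ x y, InExt n k T x y ∧ x + n = y + j with hP
  set s₁ : Finset ℕ := (Finset.range i).filter P with hs₁
  have h0 : 0 ∈ s₁ := by
    rw [hs₁, Finset.mem_filter, Finset.mem_range]
    exact ⟨hi1, 0, n, Or.inr (Or.inl ⟨rfl, rfl⟩), by omega⟩
  set s₂ : Finset ℕ := (Finset.Icc (i+1) (n-1)).filter P with hs₂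
  have h1 : n - 1 ∈ s₂ := by
    rw [hs₂, Finset.mem_filter, Finset.mem_Icc]
    exact ⟨⟨by omega, le_refl _⟩, k, k+1, Or.inr (Or.inr ⟨rfl, rfl⟩), by omega⟩
  set j := s₁.max' ⟨0, h0⟩ with hj
  set j' := s₂.min' ⟨_, h1⟩ with hj'
  have hjmem : j ∈ s₁ := Finset.max'_mem _ _
  have hjmem' : j' ∈ s₂ := Finset.min'_mem _ _
  have hjmax : ∀ m ∈ s₁, m ≤ j := fun m hm => Finset.le_max' _ _ hm
  have hjmin : ∀ m ∈ s₂, j' ≤ m := fun m hm => Finset.min'_le _ _ hm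
  rw [hs₁, Finset.mem_filter, Finset.mem_range] at hjmem
  rw [hs₂, Finset.mem_filter, Finset.mem_Icc] at hjmem'
  obtain ⟨hji, a, b, hab, e⟩ := hjmem
  obtain ⟨⟨hji', hji''⟩, a', b', hab', e'⟩ := hjmem'
  obtain ⟨ha1, ha2, ha3⟩ := ext_side hn hk T hT hab
  obtain ⟨ha1', ha2', ha3'⟩ := ext_side hn hk T hT hab'
  -- nesting of the two extreme chords
  have hnest : a ≤ a' ∧ b' ≤ b :=
    nest ha1 ha2 ha1' ha2' e e' (by omega)
      (noncross_ext T ha1 ha2 ha1' ha2' ha3 ha3' hab hab')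
      (noncross_ext T ha1' ha2' ha1 ha2 ha3' ha3 hab' hab)
  -- the candidate chord with index i, nested between the two
  obtain ⟨a'', b'', hq1, hq2, hq3, hq4, e''⟩ :
      ∃ a'' b'', a ≤ a'' ∧ a'' ≤ a' ∧ b' ≤ b'' ∧ b'' ≤ b ∧ a'' + n = b'' + i := by
    rcases le_or_gt (b' + i) (a + n) with hc | hc
    · exact ⟨a, a + n - i, by omega, by omega, by omega, by omega, by omega⟩
    · exact ⟨b' + i - n, b', by omega, by omega, by omega, by omega, by omega⟩
  have hchord : IsChord n a'' b'' := ⟨by omega, by omega, by omega⟩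
  have hnotmem : (a'', b'') ∉ T.diag := fun hmem => hno a'' b'' hmem e''
  obtain ⟨p, hp, hcross⟩ := T.maximal a'' b'' hchord hnotmem
  obtain ⟨hc1, hc2, hc3⟩ := T.chords p hp
  obtain ⟨hps1, hps2⟩ := mem_side T hT (show (p.1, p.2) ∈ T.diag by simpa using hp)
  set m := p.1 + n - p.2 with hm
  have em : p.1 + n = p.2 + m := by omega
  have hmi : m ≠ i := fun hmi => hno p.1 p.2 (by simpa using hp) (by omega)
  have hpin : InExt n k T p.1 p.2 := Or.inl (by simpa using hp)
  have key : (p.1 ≤ a ∧ b ≤ p.2) ∨ (a' ≤ p.1 ∧ p.2 ≤ b') := by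
    rcases lt_or_gt_of_ne hmi with hlt | hgt
    · -- m < i, so m ∈ s₁ and m ≤ j
      have hms : m ∈ s₁ := by
        rw [hs₁, Finset.mem_filter, Finset.mem_range]
        exact ⟨hlt, p.1, p.2, hpin, em⟩
      have hmj : m ≤ j := hjmax _ hms
      left
      rcases eq_or_lt_of_le hmj with heq | hlt'
      · have := ext_index_inj hn hk T hT hpin hab em (by omega)
        omega
      · exact nest hps1 hps2 ha1 ha2 em e hlt'
          (noncross_ext T hps1 hps2 ha1 ha2 hc2 ha3 hpin hab)
          (noncross_ext T ha1 ha2 hps1 hps2 ha3 hc2 hab hpin)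
    · -- m > i, so m ∈ s₂ and j' ≤ m
      have hms : m ∈ s₂ := by
        rw [hs₂, Finset.mem_filter, Finset.mem_Icc]
        exact ⟨⟨by omega, by omega⟩, p.1, p.2, hpin, em⟩
      have hmj : j' ≤ m := hjmin _ hms
      right
      rcases eq_or_lt_of_le hmj with heq | hlt'
      · have := ext_index_inj hn hk T hT hpin hab' em (by omega)
        omega
      · have := nest ha1' ha2' hps1 hps2 e' em hlt'
          (noncross_ext T ha1' ha2' hps1 hps2 ha3' hc2 hab' hpin)
          (noncross_ext T hps1 hps2 ha1' ha2' hc2 ha3' hpin hab')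
        exact this
  rcases hcross with ⟨hx1, hx2, hx3⟩ | ⟨hx1, hx2, hx3⟩ <;> omega

theorem exists_ext {n k : ℕ} (hn : 2 ≤ n) (hk : k ≤ n - 1) (T : Triangulation n)
    (hT : GoodTriangulation k T) {i : ℕ} (hi : i ≤ n - 1) :
    ∃ x y, InExt n k T x y ∧ x + n = y + i := by
  rcases Nat.eq_zero_or_pos i with rfl | hi1
  · exact ⟨0, n, Or.inr (Or.inl ⟨rfl, rfl⟩), by omega⟩
  rcases eq_or_lt_of_le hi with heq | hlt
  · exact ⟨k, k+1, Or.inr (Or.inr ⟨rfl, rfl⟩), by omega⟩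
  · obtain ⟨x, y, hxy, e⟩ := exists_index hn hk T hT hi1 (by omega)
    exact ⟨x, y, Or.inl hxy, e⟩

/-- discrete intermediate value theorem -/
theorem ivt (f : ℕ → ℕ) (m w : ℕ) (h0 : f 0 ≤ w) (hm : w ≤ f m)
    (hstep : ∀ i, i < m → f (i+1) ≤ f i + 1) : ∃ j ≤ m, f j = w := by
  induction m with
  | zero => exact ⟨0, le_refl 0, by omega⟩
  | succ m ih =>
    rcases le_or_gt w (f m) with h | h
    · obtain ⟨j, hj, hfj⟩ := ih h (fun i hi => hstep i (by omega))
      exact ⟨j, by omega, hfj⟩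
    · have := hstep m (Nat.lt_succ_self m)
      exact ⟨m+1, le_refl _, by omega⟩

def shuffleDiag (n k : ℕ) (S : Fin n → Fin (k+1) × Fin (n-1-k+1)) : Finset (ℕ × ℕ) :=
  (Finset.univ.filter (fun i : Fin n => 0 < (i:ℕ) ∧ (i:ℕ) < n - 1)).image
    (fun i => (((S i).1 : ℕ), ((S i).2 : ℕ) + k + 1))

theorem mem_shuffleDiag {n k : ℕ} {S : Fin n → Fin (k+1) × Fin (n-1-k+1)} {p : ℕ × ℕ} :
    p ∈ shuffleDiag n k S ↔ ∃ i : Fin n, (0 < (i:ℕ) ∧ (i:ℕ) < n - 1) ∧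
      p = (((S i).1 : ℕ), ((S i).2 : ℕ) + k + 1) := by
  unfold shuffleDiag
  rw [Finset.mem_image]
  constructor
  · rintro ⟨i, hi, rfl⟩
    rw [Finset.mem_filter] at hi
    exact ⟨i, hi.2, rfl⟩
  · rintro ⟨i, hi, rfl⟩
    exact ⟨i, by rw [Finset.mem_filter]; exact ⟨Finset.mem_univ _, hi⟩, rfl⟩

theorem shuffle_eq {n k : ℕ} (hn : 2 ≤ n) (hk : k ≤ n - 1)
    {S : Fin n → Fin (k+1) × Fin (n-1-k+1)}
    (hsum : ∀ i : Fin n, ((S i).1 : ℕ) + ((n - 1 - k) - ((S i).2 : ℕ)) = (i : ℕ))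
    (i : Fin n) : ((S i).1 : ℕ) + n = (((S i).2 : ℕ) + k + 1) + (i : ℕ) ∧
      ((S i).1 : ℕ) ≤ k ∧ ((S i).2 : ℕ) ≤ n - 1 - k := by
  have h1 : ((S i).1 : ℕ) < k + 1 := (S i).1.isLt
  have h2 : ((S i).2 : ℕ) < n - 1 - k + 1 := (S i).2.isLt
  have h3 : (i : ℕ) < n := i.isLt
  have := hsum i
  omega

def shuffleTri (n k : ℕ) (hn : 2 ≤ n) (hk : k ≤ n - 1)
    (S : Fin n → Fin (k+1) × Fin (n-1-k+1))
    (hmono : Monotone (fun i => (S i).1)) (hanti : Antitone (fun i => (S i).2))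
    (hsum : ∀ i : Fin n, ((S i).1 : ℕ) + ((n - 1 - k) - ((S i).2 : ℕ)) = (i : ℕ)) :
    Triangulation n where
  diag := shuffleDiag n k S
  chords := by
    intro p hp
    rw [mem_shuffleDiag] at hp
    obtain ⟨i, ⟨hi1, hi2⟩, rfl⟩ := hp
    obtain ⟨e, b1, b2⟩ := shuffle_eq hn hk hsum i
    exact ⟨by omega, by omega, by omega⟩
  noncross := by
    intro p hp q hq
    rw [mem_shuffleDiag] at hp hq
    obtain ⟨i, ⟨hi1, hi2⟩, rfl⟩ := hp
    obtain ⟨i', ⟨hi1', hi2'⟩, rfl⟩ := hq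
    rintro ⟨g1, g2, g3⟩
    dsimp only at g1 g2 g3
    rcases le_or_gt i' i with h | h
    · have : ((S i').1 : ℕ) ≤ ((S i).1 : ℕ) := hmono h
      omega
    · have : ((S i').2 : ℕ) ≤ ((S i).2 : ℕ) := hanti (le_of_lt h)
      omega
  maximal := by
    intro u v huv hne
    obtain ⟨hc1, hc2, hc3⟩ := huv
    have hfact := fun i : Fin n => shuffle_eq hn hk hsum i
    have hanti' : ∀ i j : Fin n, (i : ℕ) ≤ (j : ℕ) → ((S j).2 : ℕ) ≤ ((S i).2 : ℕ) :=
      fun i j hij => hanti hij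
    have hmono' : ∀ i j : Fin n, (i : ℕ) ≤ (j : ℕ) → ((S i).1 : ℕ) ≤ ((S j).1 : ℕ) :=
      fun i j hij => hmono hij
    have hn1 : n - 1 < n := by omega
    -- value of the shuffle at the extreme points
    have hlast : ((S ⟨n-1, hn1⟩).1 : ℕ) = k ∧ ((S ⟨n-1, hn1⟩).2 : ℕ) = 0 := by
      obtain ⟨e, b1, b2⟩ := hfact ⟨n-1, hn1⟩
      rw [show ((⟨n-1, hn1⟩ : Fin n) : ℕ) = n - 1 from rfl] at e
      omega
    have hfirst : ((S ⟨0, by omega⟩).1 : ℕ) = 0 ∧ ((S ⟨0, by omega⟩).2 : ℕ) = n - 1 - k := by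
      obtain ⟨e, b1, b2⟩ := hfact ⟨0, by omega⟩
      rw [show ((⟨0, by omega⟩ : Fin n) : ℕ) = 0 from rfl] at e
      omega
    rcases le_or_gt v k with hvk | hvk
    · -- case v ≤ k : find a diagonal whose lower endpoint is u+1
      set X : ℕ → ℕ := fun j => if h : j < n then ((S ⟨j, h⟩).1 : ℕ) else k with hX
      have hXval : ∀ (j : ℕ) (h : j < n), X j = ((S ⟨j, h⟩).1 : ℕ) := by
        intro j h; rw [hX]; exact dif_pos h
      have hX0 : X 0 = 0 := by rw [hXval 0 (by omega)]; exact hfirst.1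
      have hXlast : X (n-1) = k := by rw [hXval (n-1) hn1]; exact hlast.1
      have hstep : ∀ j, j < n - 1 → X (j+1) ≤ X j + 1 := by
        intro j hj
        have h1 : j < n := by omega
        have h2 : j + 1 < n := by omega
        rw [hXval j h1, hXval (j+1) h2]
        obtain ⟨e1, _, _⟩ := hfact ⟨j, h1⟩
        obtain ⟨e2, _, _⟩ := hfact ⟨j+1, h2⟩
        rw [show ((⟨j, h1⟩ : Fin n) : ℕ) = j from rfl] at e1
        rw [show ((⟨j+1, h2⟩ : Fin n) : ℕ) = j + 1 from rfl] at e2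
        have := hanti' ⟨j, h1⟩ ⟨j+1, h2⟩ (Nat.le_succ j)
        omega
      obtain ⟨j, hjle, hjval⟩ := ivt X (n-1) (u+1) (by omega) (by omega) hstep
      have hjn : j < n := by omega
      have hj1 : 0 < j := by
        rcases Nat.eq_zero_or_pos j with rfl | h
        · omega
        · exact h
      have hj2 : j < n - 1 := by
        rcases eq_or_lt_of_le hjle with rfl | h
        · omega
        · exact h
      rw [hXval j hjn] at hjval
      obtain ⟨e, b1, b2⟩ := hfact ⟨j, hjn⟩
      refine ⟨(((S ⟨j, hjn⟩).1 : ℕ), ((S ⟨j, hjn⟩).2 : ℕ) + k + 1),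
        mem_shuffleDiag.mpr ⟨⟨j, hjn⟩, ⟨hj1, hj2⟩, rfl⟩, Or.inr ?_⟩
      dsimp only
      omega
    rcases le_or_gt (k+1) u with huk | huk
    · -- case k+1 ≤ u : find a diagonal whose upper endpoint is v-1
      set Z : ℕ → ℕ := fun j => if h : j < n then n - (((S ⟨j, h⟩).2 : ℕ) + k + 1) else n - k - 1
        with hZ
      have hZval : ∀ (j : ℕ) (h : j < n), Z j = n - (((S ⟨j, h⟩).2 : ℕ) + k + 1) := by
        intro j h; rw [hZ]; exact dif_pos h
      have hZ0 : Z 0 = 0 := by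
        rw [hZval 0 (by omega), hfirst.2]; omega
      have hZlast : Z (n-1) = n - 1 - k := by
        rw [hZval (n-1) hn1, hlast.2]; omega
      have hstep : ∀ j, j < n - 1 → Z (j+1) ≤ Z j + 1 := by
        intro j hj
        have h1 : j < n := by omega
        have h2 : j + 1 < n := by omega
        rw [hZval j h1, hZval (j+1) h2]
        obtain ⟨e1, _, c1⟩ := hfact ⟨j, h1⟩
        obtain ⟨e2, _, c2⟩ := hfact ⟨j+1, h2⟩
        rw [show ((⟨j, h1⟩ : Fin n) : ℕ) = j from rfl] at e1
        rw [show ((⟨j+1, h2⟩ : Fin n) : ℕ) = j + 1 from rfl] at e2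
        have := hmono' ⟨j, h1⟩ ⟨j+1, h2⟩ (Nat.le_succ j)
        omega
      obtain ⟨j, hjle, hjval⟩ := ivt Z (n-1) (n + 1 - v) (by omega) (by omega) hstep
      have hjn : j < n := by omega
      obtain ⟨e, b1, b2⟩ := hfact ⟨j, hjn⟩
      rw [hZval j hjn] at hjval
      -- so the upper endpoint is v - 1
      have hup : ((S ⟨j, hjn⟩).2 : ℕ) + k + 1 = v - 1 := by omega
      have hj1 : 0 < j := by
        rcases Nat.eq_zero_or_pos j with rfl | h
        · rw [hfirst.2] at hup; omega
        · exact h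
      have hj2 : j < n - 1 := by
        rcases eq_or_lt_of_le hjle with rfl | h
        · rw [hlast.2] at hup; omega
        · exact h
      refine ⟨(((S ⟨j, hjn⟩).1 : ℕ), ((S ⟨j, hjn⟩).2 : ℕ) + k + 1),
        mem_shuffleDiag.mpr ⟨⟨j, hjn⟩, ⟨hj1, hj2⟩, rfl⟩, Or.inl ?_⟩
      dsimp only
      omega
    · -- middle case : u ≤ k < v
      set i : ℕ := u + n - v with hi
      have hi1 : 1 ≤ i := by omega
      have hi2 : i < n - 1 := by omega
      have hin : i < n := by omega
      obtain ⟨e, b1, b2⟩ := hfact ⟨i, hin⟩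
      rw [show ((⟨i, hin⟩ : Fin n) : ℕ) = i from rfl] at e
      rcases lt_trichotomy (((S ⟨i, hin⟩).1 : ℕ)) u with h | h | h
      · exact ⟨(((S ⟨i, hin⟩).1 : ℕ), ((S ⟨i, hin⟩).2 : ℕ) + k + 1),
          mem_shuffleDiag.mpr ⟨⟨i, hin⟩, ⟨hi1, hi2⟩, rfl⟩, Or.inl ⟨h, by omega, by omega⟩⟩
      · exfalso
        apply hne
        rw [mem_shuffleDiag]
        refine ⟨⟨i, hin⟩, ⟨hi1, hi2⟩, ?_⟩
        rw [Prod.mk.injEq]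
        exact ⟨h.symm, by omega⟩
      · exact ⟨(((S ⟨i, hin⟩).1 : ℕ), ((S ⟨i, hin⟩).2 : ℕ) + k + 1),
          mem_shuffleDiag.mpr ⟨⟨i, hin⟩, ⟨hi1, hi2⟩, rfl⟩, Or.inr ⟨h, by omega, by omega⟩⟩

theorem shuffleTri_good {n k : ℕ} (hn : 2 ≤ n) (hk : k ≤ n - 1)
    (S : Fin n → Fin (k+1) × Fin (n-1-k+1))
    (hmono : Monotone (fun i => (S i).1)) (hanti : Antitone (fun i => (S i).2))
    (hsum : ∀ i : Fin n, ((S i).1 : ℕ) + ((n - 1 - k) - ((S i).2 : ℕ)) = (i : ℕ)) :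
    GoodTriangulation k (shuffleTri n k hn hk S hmono hanti hsum) := by
  constructor
  · rintro a b c ⟨t1, t2, t3, _, _, hside⟩ hck
    rcases hside with h | h | h
    · omega
    · omega
    · rw [show (shuffleTri n k hn hk S hmono hanti hsum).diag = shuffleDiag n k S from rfl,
        mem_shuffleDiag] at h
      obtain ⟨i, _, hpe⟩ := h
      have : c = ((S i).2 : ℕ) + k + 1 := congrArg Prod.snd hpe
      omega
  · rintro a b c ⟨t1, t2, t3, _, _, hside⟩ hak
    rcases hside with h | h | h
    · omega
    · omega
    · rw [show (shuffleTri n k hn hk S hmono hanti hsum).diag = shuffleDiag n k S from rfl,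
        mem_shuffleDiag] at h
      obtain ⟨i, _, hpe⟩ := h
      have h1 : a = ((S i).1 : ℕ) := congrArg Prod.fst hpe
      have h2 : ((S i).1 : ℕ) < k + 1 := (S i).1.isLt
      omega

theorem card_shuffles (n k : ℕ) (hn : 2 ≤ n) (hk : k ≤ n - 1) :
    Nat.card {S : Fin n → Fin (k + 1) × Fin (n - 1 - k + 1) //
        Monotone (fun i => (S i).1) ∧ Antitone (fun i => (S i).2) ∧
        ∀ i : Fin n, ((S i).1 : ℕ) + ((n - 1 - k) - ((S i).2 : ℕ)) = (i : ℕ)}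
      = Nat.choose (n - 1) k := by
  classical
  set PC := Finset.powersetCard k (Finset.range (n-1)) with hPC
  set xA : Finset ℕ → ℕ → ℕ := fun A i => ((Finset.range i).filter (· ∈ A)).card with hxA
  have f1 : ∀ A : Finset ℕ, ∀ i j : ℕ, i ≤ j → xA A i ≤ xA A j := by
    intro A i j hij
    exact Finset.card_le_card (Finset.filter_subset_filter _
      (Finset.range_subset_range.mpr hij))
  have f2 : ∀ A : Finset ℕ, ∀ i, xA A i ≤ i := by
    intro A i
    calc ((Finset.range i).filter (· ∈ A)).card ≤ (Finset.range i).card :=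
          Finset.card_le_card (Finset.filter_subset _ _)
      _ = i := Finset.card_range i
  have f3 : ∀ A : Finset ℕ, ∀ i, xA A i ≤ A.card := by
    intro A i
    exact Finset.card_le_card (fun a ha => (Finset.mem_filter.mp ha).2)
  have f3' : ∀ A : Finset ℕ, A ⊆ Finset.range (n-1) → xA A (n-1) = A.card := by
    intro A hA
    have : (Finset.range (n-1)).filter (· ∈ A) = A := by
      rw [Finset.filter_mem_eq_inter, Finset.inter_eq_right.mpr hA]
    rw [hxA]; dsimp only; rw [this]
  have f4 : ∀ A : Finset ℕ, A ⊆ Finset.range (n-1) → A.card = k →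
      ∀ i ≤ n - 1, i - xA A i ≤ n - 1 - k := by
    intro A hA hAc i hi
    have hsplit := Finset.card_filter_add_card_filter_not
      (s := Finset.range i) (p := (· ∈ A))
    have hsub : (Finset.range i).filter (fun a => ¬ a ∈ A) ⊆ Finset.range (n-1) \ A := by
      intro a ha
      rw [Finset.mem_filter, Finset.mem_range] at ha
      rw [Finset.mem_sdiff, Finset.mem_range]
      exact ⟨by omega, ha.2⟩
    have hcard := Finset.card_le_card hsub
    rw [Finset.card_sdiff_of_subset hA, Finset.card_range, hAc] at hcard
    have := Finset.card_range i
    rw [hxA]; dsimp only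
    omega
  have f5 : ∀ A : Finset ℕ, ∀ i, (i ∈ A → xA A (i+1) = xA A i + 1) ∧
      (i ∉ A → xA A (i+1) = xA A i) := by
    intro A i
    rw [hxA]; dsimp only
    rw [Finset.range_add_one, Finset.filter_insert]
    constructor
    · intro h
      rw [if_pos h, Finset.card_insert_of_notMem (by
        intro hmem
        exact absurd (Finset.mem_range.mp (Finset.mem_filter.mp hmem).1) (lt_irrefl i))]
    · intro h
      rw [if_neg h]
  have fstepgen : ∀ A : Finset ℕ, ∀ i d, xA A (i + d) ≤ xA A i + d := by
    intro A i d
    induction d with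
    | zero => simp
    | succ d ih =>
      have h5 := f5 A (i + d)
      have he : i + (d + 1) = (i + d) + 1 := by omega
      rw [he]
      by_cases h : (i + d) ∈ A
      · have := h5.1 h; omega
      · have := h5.2 h; omega
  have hΓb : ∀ A ∈ PC, ∀ i : Fin n, xA A (i : ℕ) < k + 1 ∧
      (n - 1 - k) - ((i : ℕ) - xA A (i : ℕ)) < n - 1 - k + 1 := by
    intro A hA i
    rw [hPC, Finset.mem_powersetCard] at hA
    have := f3 A (i : ℕ)
    omega
  set Γval : {A // A ∈ PC} → (Fin n → Fin (k + 1) × Fin (n - 1 - k + 1)) :=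
    fun A i => (⟨xA A.1 (i : ℕ), (hΓb A.1 A.2 i).1⟩,
      ⟨(n - 1 - k) - ((i : ℕ) - xA A.1 (i : ℕ)), (hΓb A.1 A.2 i).2⟩) with hΓval
  have hp1 : ∀ A, Monotone (fun i => (Γval A i).1) := by
    intro A i j hij
    exact Fin.mk_le_mk.mpr (f1 A.1 (i : ℕ) (j : ℕ) hij)
  have hp2 : ∀ A, Antitone (fun i => (Γval A i).2) := by
    intro A i j hij
    have hAA := Finset.mem_powersetCard.mp A.2
    have h1 : xA A.1 (j : ℕ) ≤ xA A.1 (i : ℕ) + ((j : ℕ) - (i : ℕ)) := by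
      have h := fstepgen A.1 (i : ℕ) ((j : ℕ) - (i : ℕ))
      have hij' : (i : ℕ) ≤ (j : ℕ) := hij
      rw [show (i : ℕ) + ((j : ℕ) - (i : ℕ)) = (j : ℕ) by omega] at h
      exact h
    have h2 := f2 A.1 (i : ℕ)
    exact Fin.mk_le_mk.mpr (by omega)
  have hp3 : ∀ A, ∀ i : Fin n, (((Γval A i).1 : ℕ)) + ((n - 1 - k) - ((Γval A i).2 : ℕ))
      = (i : ℕ) := by
    intro A i
    have hAA := Finset.mem_powersetCard.mp A.2
    have h2 := f2 A.1 (i : ℕ)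
    have h4 := f4 A.1 hAA.1 hAA.2 (i : ℕ) (by have := i.isLt; omega)
    show xA A.1 (i : ℕ) + ((n - 1 - k) - ((n - 1 - k) - ((i : ℕ) - xA A.1 (i : ℕ)))) = (i : ℕ)
    omega
  set Γ : {A // A ∈ PC} → {S : Fin n → Fin (k + 1) × Fin (n - 1 - k + 1) //
        Monotone (fun i => (S i).1) ∧ Antitone (fun i => (S i).2) ∧
        ∀ i : Fin n, ((S i).1 : ℕ) + ((n - 1 - k) - ((S i).2 : ℕ)) = (i : ℕ)} :=
    fun A => ⟨Γval A, hp1 A, hp2 A, hp3 A⟩ with hΓ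
  have hinj : Function.Injective Γ := by
    intro A A' h
    have hval : ∀ i : Fin n, xA A.1 (i : ℕ) = xA A'.1 (i : ℕ) := by
      intro i
      have h' : Γval A i = Γval A' i := by
        have := congrArg (fun t => t.1 i) h
        simpa [hΓ] using this
      exact congrArg (fun q => (q.1 : ℕ)) h'
    have hA := Finset.mem_powersetCard.mp A.2
    have hA' := Finset.mem_powersetCard.mp A'.2
    apply Subtype.ext
    apply Finset.ext
    intro a
    by_cases ha : a < n - 1
    · have h1 : a < n := by omega
      have h2 : a + 1 < n := by omega
      have e1 := hval ⟨a, h1⟩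
      have e2 := hval ⟨a+1, h2⟩
      rw [show ((⟨a, h1⟩ : Fin n) : ℕ) = a from rfl] at e1
      rw [show ((⟨a+1, h2⟩ : Fin n) : ℕ) = a + 1 from rfl] at e2
      have g1 := f5 A.1 a
      have g2 := f5 A'.1 a
      constructor
      · intro hmem
        by_contra hmem'
        have := g1.1 hmem
        have := g2.2 hmem'
        omega
      · intro hmem
        by_contra hmem'
        have := g2.1 hmem
        have := g1.2 hmem'
        omega
    · constructor
      · intro hmem; exact absurd (Finset.mem_range.mp (hA.1 hmem)) ha
      · intro hmem; exact absurd (Finset.mem_range.mp (hA'.1 hmem)) ha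
  have hsurj : Function.Surjective Γ := by
    rintro ⟨S, hmono, hanti, hsum⟩
    have hfact := fun i : Fin n => shuffle_eq hn hk hsum i
    set xe : ℕ → ℕ := fun j => if h : j < n then ((S ⟨j, h⟩).1 : ℕ) else k with hxe
    have hxeval : ∀ (j : ℕ) (h : j < n), xe j = ((S ⟨j, h⟩).1 : ℕ) := by
      intro j h; rw [hxe]; exact dif_pos h
    have hn1 : n - 1 < n := by omega
    have hxe0 : xe 0 = 0 := by
      rw [hxeval 0 (by omega)]
      obtain ⟨e, b1, b2⟩ := hfact ⟨0, by omega⟩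
      rw [show ((⟨0, by omega⟩ : Fin n) : ℕ) = 0 from rfl] at e
      omega
    have hxelast : xe (n-1) = k := by
      rw [hxeval (n-1) hn1]
      obtain ⟨e, b1, b2⟩ := hfact ⟨n-1, hn1⟩
      rw [show ((⟨n-1, hn1⟩ : Fin n) : ℕ) = n - 1 from rfl] at e
      omega
    have hstep : ∀ j, j < n - 1 → xe j ≤ xe (j+1) ∧ xe (j+1) ≤ xe j + 1 := by
      intro j hj
      have h1 : j < n := by omega
      have h2 : j + 1 < n := by omega
      rw [hxeval j h1, hxeval (j+1) h2]
      obtain ⟨e1, _, _⟩ := hfact ⟨j, h1⟩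
      obtain ⟨e2, _, _⟩ := hfact ⟨j+1, h2⟩
      rw [show ((⟨j, h1⟩ : Fin n) : ℕ) = j from rfl] at e1
      rw [show ((⟨j+1, h2⟩ : Fin n) : ℕ) = j + 1 from rfl] at e2
      have hm : ((S ⟨j, h1⟩).1 : ℕ) ≤ ((S ⟨j+1, h2⟩).1 : ℕ) :=
        hmono (show (⟨j, h1⟩ : Fin n) ≤ ⟨j+1, h2⟩ from Nat.le_succ j)
      have ha : ((S ⟨j+1, h2⟩).2 : ℕ) ≤ ((S ⟨j, h1⟩).2 : ℕ) :=
        hanti (show (⟨j, h1⟩ : Fin n) ≤ ⟨j+1, h2⟩ from Nat.le_succ j)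
      omega
    set A : Finset ℕ := (Finset.range (n-1)).filter (fun a => xe (a+1) = xe a + 1) with hA
    have hAsub : A ⊆ Finset.range (n-1) := Finset.filter_subset _ _
    have hmemA : ∀ a, a ∈ A ↔ (a < n - 1 ∧ xe (a+1) = xe a + 1) := by
      intro a
      rw [hA, Finset.mem_filter, Finset.mem_range]
    have key : ∀ i ≤ n - 1, xA A i = xe i := by
      intro i
      induction i with
      | zero =>
        intro _
        rw [hxe0, hxA]
        simp
      | succ i ih =>
        intro hi
        have hi' : i < n - 1 := by omega
        have hrec := ih (by omega)
        have g := f5 A i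
        have hst := hstep i hi'
        by_cases hmem : i ∈ A
        · have := g.1 hmem
          have := (hmemA i).mp hmem
          omega
        · have := g.2 hmem
          have hne : ¬ (xe (i+1) = xe i + 1) := by
            intro hcon
            exact hmem ((hmemA i).mpr ⟨hi', hcon⟩)
          omega
    have hAcard : A.card = k := by
      rw [← f3' A hAsub, key (n-1) (le_refl _), hxelast]
    have hApc : A ∈ PC := by
      rw [hPC, Finset.mem_powersetCard]; exact ⟨hAsub, hAcard⟩
    refine ⟨⟨A, hApc⟩, ?_⟩
    apply Subtype.ext
    show Γval ⟨A, hApc⟩ = S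
    funext i
    have hi : (i : ℕ) ≤ n - 1 := by have := i.isLt; omega
    have hx : xA A (i : ℕ) = ((S i).1 : ℕ) := by
      rw [key (i : ℕ) hi, hxeval (i : ℕ) i.isLt, Fin.eta]
    obtain ⟨e, b1, b2⟩ := hfact i
    have hy : (n - 1 - k) - ((i : ℕ) - xA A (i : ℕ)) = ((S i).2 : ℕ) := by
      rw [hx]; omega
    rw [hΓval]
    rw [Prod.ext_iff]
    exact ⟨Fin.ext hx, Fin.ext hy⟩
  have hcard1 : Nat.card {A // A ∈ PC} = Nat.choose (n-1) k := by
    rw [Nat.card_eq_finsetCard PC, hPC, Finset.card_powersetCard, Finset.card_range]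
  rw [← Nat.card_congr (Equiv.ofBijective Γ ⟨hinj, hsurj⟩), hcard1]

theorem shuffleTri_diag {n k : ℕ} (hn : 2 ≤ n) (hk : k ≤ n - 1)
    (S : Fin n → Fin (k+1) × Fin (n-1-k+1))
    (hmono : Monotone (fun i => (S i).1)) (hanti : Antitone (fun i => (S i).2))
    (hsum : ∀ i : Fin n, ((S i).1 : ℕ) + ((n - 1 - k) - ((S i).2 : ℕ)) = (i : ℕ)) :
    (shuffleTri n k hn hk S hmono hanti hsum).diag = shuffleDiag n k S := rfl

end TriShuffleAux

/-- There is a bijection between triangulations of the convex `(n+1)`-gon with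
no triangle contained in `{0,...,k}` and none in `{k+1,...,n}`, and shuffles
`[n-1] → [k] × [n-1-k]ᵒᵖ`; in particular there are `C(n-1, k)` of them. -/
theorem triangulations_equiv_shuffles (n k : ℕ) (hn : 2 ≤ n) (hk : k ≤ n - 1) :
    Nonempty ({T : Triangulation n // GoodTriangulation k T} ≃
      {S : Fin n → Fin (k + 1) × Fin (n - 1 - k + 1) //
        Monotone (fun i => (S i).1) ∧ Antitone (fun i => (S i).2) ∧
        ∀ i : Fin n, ((S i).1 : ℕ) + ((n - 1 - k) - ((S i).2 : ℕ)) = (i : ℕ)}) ∧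
    Nat.card {T : Triangulation n // GoodTriangulation k T} = Nat.choose (n - 1) k := by
  classical
  set Φ : {S : Fin n → Fin (k + 1) × Fin (n - 1 - k + 1) //
        Monotone (fun i => (S i).1) ∧ Antitone (fun i => (S i).2) ∧
        ∀ i : Fin n, ((S i).1 : ℕ) + ((n - 1 - k) - ((S i).2 : ℕ)) = (i : ℕ)} →
      {T : Triangulation n // GoodTriangulation k T} :=
    fun S => ⟨TriShuffleAux.shuffleTri n k hn hk S.1 S.2.1 S.2.2.1 S.2.2.2,
      TriShuffleAux.shuffleTri_good hn hk S.1 S.2.1 S.2.2.1 S.2.2.2⟩ with hΦ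
  have hdiagΦ : ∀ S, (Φ S).1.diag = TriShuffleAux.shuffleDiag n k S.1 := by
    intro S
    rw [hΦ]
    rfl
  have hinj : Function.Injective Φ := by
    intro S S' h
    have hd : TriShuffleAux.shuffleDiag n k S.1 = TriShuffleAux.shuffleDiag n k S'.1 := by
      rw [← hdiagΦ S, ← hdiagΦ S', h]
    have key : ∀ i : Fin n, ((S.1 i).1 : ℕ) = ((S'.1 i).1 : ℕ) ∧
        ((S.1 i).2 : ℕ) = ((S'.1 i).2 : ℕ) := by
      intro i
      obtain ⟨e1, b1, b2⟩ := TriShuffleAux.shuffle_eq hn hk S.2.2.2 i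
      obtain ⟨e1', b1', b2'⟩ := TriShuffleAux.shuffle_eq hn hk S'.2.2.2 i
      rcases Nat.eq_zero_or_pos (i : ℕ) with h0 | h0
      · omega
      rcases eq_or_lt_of_le (show (i : ℕ) ≤ n - 1 by have := i.isLt; omega) with hl | hl
      · omega
      · have hmem : (((S.1 i).1 : ℕ), ((S.1 i).2 : ℕ) + k + 1)
            ∈ TriShuffleAux.shuffleDiag n k S.1 :=
          TriShuffleAux.mem_shuffleDiag.mpr ⟨i, ⟨h0, hl⟩, rfl⟩
        rw [hd, TriShuffleAux.mem_shuffleDiag] at hmem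
        obtain ⟨i', hi', hpe⟩ := hmem
        obtain ⟨e2, b3, b4⟩ := TriShuffleAux.shuffle_eq hn hk S'.2.2.2 i'
        have hxeq : ((S.1 i).1 : ℕ) = ((S'.1 i').1 : ℕ) := congrArg Prod.fst hpe
        have hyeq : ((S.1 i).2 : ℕ) + k + 1 = ((S'.1 i').2 : ℕ) + k + 1 :=
          congrArg Prod.snd hpe
        have hii : i' = i := Fin.ext (by omega)
        subst hii
        omega
    apply Subtype.ext
    funext i
    exact Prod.ext (Fin.ext (key i).1) (Fin.ext (key i).2)
  have hsurj : Function.Surjective Φ := by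
    rintro ⟨T, hT⟩
    have H : ∀ i : Fin n, ∃ x y, TriShuffleAux.InExt n k T x y ∧ x + n = y + (i : ℕ) :=
      fun i => TriShuffleAux.exists_ext hn hk T hT (by have := i.isLt; omega)
    choose Xf Yf hIn hEq using H
    have hside : ∀ i, Xf i ≤ k ∧ k < Yf i ∧ Yf i ≤ n :=
      fun i => TriShuffleAux.ext_side hn hk T hT (hIn i)
    have hb1 : ∀ i : Fin n, Xf i < k + 1 := fun i => by have := (hside i).1; omega
    have hb2 : ∀ i : Fin n, Yf i - (k+1) < n - 1 - k + 1 := fun i => by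
      have := hside i; omega
    set Sf : Fin n → Fin (k + 1) × Fin (n - 1 - k + 1) :=
      fun i => (⟨Xf i, hb1 i⟩, ⟨Yf i - (k+1), hb2 i⟩) with hSf
    have hSf1 : ∀ i, ((Sf i).1 : ℕ) = Xf i := fun i => rfl
    have hSf2 : ∀ i, ((Sf i).2 : ℕ) = Yf i - (k+1) := fun i => rfl
    have hnest : ∀ i j : Fin n, (i : ℕ) < (j : ℕ) → Xf i ≤ Xf j ∧ Yf j ≤ Yf i := by
      intro i j hij
      exact TriShuffleAux.nest (hside i).1 (hside i).2.1 (hside j).1 (hside j).2.1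
        (hEq i) (hEq j) hij
        (TriShuffleAux.noncross_ext T (hside i).1 (hside i).2.1 (hside j).1 (hside j).2.1
          (hside i).2.2 (hside j).2.2 (hIn i) (hIn j))
        (TriShuffleAux.noncross_ext T (hside j).1 (hside j).2.1 (hside i).1 (hside i).2.1
          (hside j).2.2 (hside i).2.2 (hIn j) (hIn i))
    have hmono : Monotone (fun i => (Sf i).1) := by
      intro i j hij
      rcases eq_or_lt_of_le (show (i : ℕ) ≤ (j : ℕ) from hij) with he | hlt
      · have : i = j := Fin.ext he
        subst this; exact le_refl _
      · show (Sf i).1 ≤ (Sf j).1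
        rw [Fin.le_def, hSf1, hSf1]
        exact (hnest i j hlt).1
    have hanti : Antitone (fun i => (Sf i).2) := by
      intro i j hij
      rcases eq_or_lt_of_le (show (i : ℕ) ≤ (j : ℕ) from hij) with he | hlt
      · have : i = j := Fin.ext he
        subst this; exact le_refl _
      · show (Sf j).2 ≤ (Sf i).2
        rw [Fin.le_def, hSf2, hSf2]
        have := (hnest i j hlt).2
        omega
    have hsum : ∀ i : Fin n, ((Sf i).1 : ℕ) + ((n - 1 - k) - ((Sf i).2 : ℕ)) = (i : ℕ) := by
      intro i
      rw [hSf1, hSf2]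
      have h1 := hside i
      have h2 := hEq i
      have h3 := i.isLt
      omega
    refine ⟨⟨Sf, hmono, hanti, hsum⟩, ?_⟩
    apply Subtype.ext
    apply TriShuffleAux.tri_ext
    rw [hdiagΦ]
    apply Finset.ext
    intro p
    constructor
    · intro hp
      rw [TriShuffleAux.mem_shuffleDiag] at hp
      obtain ⟨i, ⟨hi1, hi2⟩, rfl⟩ := hp
      have hy : ((Sf i).2 : ℕ) + k + 1 = Yf i := by
        rw [hSf2]
        have := (hside i).2.1; have := (hside i).2.2; omega
      rw [hSf1, hy]
      rcases hIn i with h | ⟨h1, h2⟩ | ⟨h1, h2⟩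
      · exact h
      · exfalso; have := hEq i; omega
      · exfalso; have := hEq i; omega
    · intro hp
      obtain ⟨c1, c2, c3⟩ := T.chords p hp
      obtain ⟨s1, s2⟩ := TriShuffleAux.mem_side T hT
        (show (p.1, p.2) ∈ T.diag by simpa using hp)
      have hin : p.1 + n - p.2 < n := by omega
      have hi1 : 0 < p.1 + n - p.2 := by omega
      have hi2 : p.1 + n - p.2 < n - 1 := by omega
      have e' := hEq ⟨p.1 + n - p.2, hin⟩
      rw [show ((⟨p.1 + n - p.2, hin⟩ : Fin n) : ℕ) = p.1 + n - p.2 from rfl] at e'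
      have hee := TriShuffleAux.ext_index_inj hn hk T hT
        (Or.inl (show (p.1, p.2) ∈ T.diag by simpa using hp)) (hIn ⟨p.1 + n - p.2, hin⟩)
        (show p.1 + n = p.2 + (p.1 + n - p.2) by omega) e'
      rw [TriShuffleAux.mem_shuffleDiag]
      refine ⟨⟨p.1 + n - p.2, hin⟩, ⟨hi1, hi2⟩, ?_⟩
      have hy : ((Sf ⟨p.1 + n - p.2, hin⟩).2 : ℕ) + k + 1 = Yf ⟨p.1 + n - p.2, hin⟩ := by
        rw [hSf2]
        have := (hside ⟨p.1 + n - p.2, hin⟩).2.1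
        have := (hside ⟨p.1 + n - p.2, hin⟩).2.2
        omega
      rw [hSf1, hy]
      exact Prod.ext hee.1 hee.2
  have e := Equiv.ofBijective Φ ⟨hinj, hsurj⟩
  refine ⟨⟨e.symm⟩, ?_⟩
  rw [Nat.card_congr e.symm]
  exact TriShuffleAux.card_shuffles n k hn hk
end

section
/- For n ≥ 2 and 0 ≤ k ≤ n−1, the number of triangulations of a convex (n+1)-gon with vertices 0 < 1 < ... < n that have no triangle with all three vertices contained in {0,...,k} and no triangle with all three vertices contained in {k+1,...,n} equals the binomial coefficient C(n−1, k). -/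
namespace GTAux

open Finset

def Edg (n : ℕ) (T : Triangulation n) (a b : ℕ) : Prop :=
  b = a + 1 ∨ (a = 0 ∧ b = n) ∨ (a, b) ∈ T.diag

lemma triang_ext {n : ℕ} {T T' : Triangulation n} (h : T.diag = T'.diag) : T = T' := by
  cases T; cases T'; cases h; rfl

lemma exists_split {n : ℕ} (T : Triangulation n) {a b : ℕ} (hab : a + 2 ≤ b) (hbn : b ≤ n)
    (h : (a, b) ∈ T.diag ∨ (a = 0 ∧ b = n)) :
    ∃ c, a < c ∧ c < b ∧ Edg n T a c ∧ Edg n T c b := by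
  classical
  have hne : ((Finset.Ioo a b).filter (fun c => Edg n T a c)).Nonempty := by
    refine ⟨a + 1, ?_⟩
    simp only [mem_filter, mem_Ioo]
    exact ⟨⟨Nat.lt_succ_self a, by omega⟩, Or.inl rfl⟩
  obtain ⟨c, hcs, hmax⟩ : ∃ c ∈ (Finset.Ioo a b).filter (fun c => Edg n T a c),
      ∀ d ∈ (Finset.Ioo a b).filter (fun c => Edg n T a c), d ≤ c :=
    ⟨_, Finset.max'_mem _ hne, fun d hd => Finset.le_max' _ d hd⟩
  obtain ⟨hcI, hce⟩ := mem_filter.mp hcs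
  rw [mem_Ioo] at hcI
  refine ⟨c, hcI.1, hcI.2, hce, ?_⟩
  by_cases hb1 : b = c + 1
  · exact Or.inl hb1
  have hchord : IsChord n c b := ⟨by omega, hbn, by omega⟩
  by_cases hdm : (c, b) ∈ T.diag
  · exact Or.inr (Or.inr hdm)
  obtain ⟨p, hp, hcase⟩ := T.maximal c b hchord hdm
  obtain ⟨p1, p2⟩ := p
  exfalso
  have hpc := T.chords (p1, p2) hp
  simp only at hcase
  rcases hcase with ⟨h1, h2, h3⟩ | ⟨h1, h2, h3⟩
  · rcases Nat.lt_trichotomy p1 a with hpa | hpa | hpa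
    · rcases h with hd | ⟨rfl, rfl⟩
      · exact T.noncross (p1, p2) hp (a, b) hd ⟨hpa, by omega, h3⟩
      · omega
    · subst hpa
      have : p2 ≤ c := hmax p2 (by
        simp only [mem_filter, mem_Ioo]
        exact ⟨⟨by omega, h3⟩, Or.inr (Or.inr hp)⟩)
      omega
    · rcases hce with h' | ⟨rfl, rfl⟩ | hd
      · omega
      · omega
      · exact T.noncross (a, c) hd (p1, p2) hp ⟨hpa, h1, h2⟩
  · rcases h with hd | ⟨rfl, rfl⟩
    · exact T.noncross (a, b) hd (p1, p2) hp ⟨by omega, h2, h3⟩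
    · have h4 : p2 ≤ b := hpc.2.1
      omega

section GoodT

variable {n k : ℕ} (T : Triangulation n)

lemma diag_cross (hG : GoodTriangulation k T) {a b : ℕ} (h : (a, b) ∈ T.diag) :
    a ≤ k ∧ k < b := by
  obtain ⟨hc1, hc2, hc3⟩ := T.chords (a, b) h
  obtain ⟨c, h1, h2, e1, e2⟩ := exists_split T (by omega) hc2 (Or.inl h)
  have htri : IsTriangle T a c b := ⟨h1, h2, hc2, e1, e2, Or.inr (Or.inr h)⟩
  have g1 := hG.1 a c b htri
  have g2 := hG.2 a c b htri
  omega

/-- the chain predicate: `(a,b)` is the weight-`i` element of the staircase. -/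
def Q (T : Triangulation n) (k i a b : ℕ) : Prop :=
  a ≤ k ∧ k < b ∧ b ≤ n ∧ a + (n - b) = i ∧ b - a = n - i ∧
    ((a, b) ∈ T.diag ∨ (a = 0 ∧ b = n) ∨ (a, b) = (k, k + 1))

lemma Q_unique {i a b a' b' : ℕ} (h : Q T k i a b) (h' : Q T k i a' b') :
    a = a' ∧ b = b' := by
  obtain ⟨ha, hb, hbn, hw, hd, hcase⟩ := h
  obtain ⟨ha', hb', hbn', hw', hd', hcase'⟩ := h'
  rcases hcase with hD | hE | hK
  · rcases hcase' with hD' | hE' | hK'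
    · -- both in diag
      rcases Nat.lt_trichotomy a a' with hlt | heq | hlt
      · have := T.noncross (a, b) hD (a', b') hD'
        simp only at this
        omega
      · omega
      · have := T.noncross (a', b') hD' (a, b) hD
        simp only at this
        omega
    · -- (a',b') = (0,n): weight 0, so a = 0, b = n; but (a,b) ∈ diag can't be (0,n)
      have := (T.chords (a, b) hD).2.2
      simp only at this
      omega
    · -- (a',b') = (k,k+1): weight n-1, then b-a = 1, contradicting chord
      have := (T.chords (a, b) hD).1
      simp only at this
      have hk1 : a' = k ∧ b' = k + 1 := by
        exact ⟨congrArg Prod.fst hK', congrArg Prod.snd hK'⟩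
      omega
  · rcases hcase' with hD' | hE' | hK'
    · have := (T.chords (a', b') hD').2.2
      simp only at this
      omega
    · omega
    · have hk1 : a' = k ∧ b' = k + 1 := ⟨congrArg Prod.fst hK', congrArg Prod.snd hK'⟩
      omega
  · have hk0 : a = k ∧ b = k + 1 := ⟨congrArg Prod.fst hK, congrArg Prod.snd hK⟩
    rcases hcase' with hD' | hE' | hK'
    · have := (T.chords (a', b') hD').1
      simp only at this
      omega
    · omega
    · have hk1 : a' = k ∧ b' = k + 1 := ⟨congrArg Prod.fst hK', congrArg Prod.snd hK'⟩
      omega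

lemma succ_step (hG : GoodTriangulation k T) {a b : ℕ} (ha : a ≤ k) (hb : k < b)
    (hbn : b ≤ n) (h2 : a + 2 ≤ b) (hd : (a, b) ∈ T.diag ∨ (a = 0 ∧ b = n)) :
    ((a + 1, b) ∈ T.diag ∨ (a + 1 = k ∧ b = k + 1)) ∨
      ((a, b - 1) ∈ T.diag ∨ (a = k ∧ b - 1 = k + 1)) := by
  obtain ⟨c, h1, hc2, e1, e2⟩ := exists_split T h2 hbn hd
  by_cases hck : c ≤ k
  · -- c = a + 1
    have hca : c = a + 1 := by
      rcases e1 with h' | ⟨rfl, rfl⟩ | hD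
      · exact h'
      · omega
      · have := diag_cross T hG hD; omega
    subst hca
    rcases e2 with h' | ⟨h', _⟩ | hD
    · exact Or.inl (Or.inr ⟨by omega, by omega⟩)
    · omega
    · exact Or.inl (Or.inl hD)
  · -- c = b - 1
    have hcb : c = b - 1 := by
      rcases e2 with h' | ⟨h', _⟩ | hD
      · omega
      · omega
      · have := diag_cross T hG hD; omega
    subst hcb
    rcases e1 with h' | ⟨rfl, h'⟩ | hD
    · exact Or.inr (Or.inr ⟨by omega, by omega⟩)
    · omega
    · exact Or.inr (Or.inl hD)

lemma Q_exists (hn : 2 ≤ n) (hk : k ≤ n - 1) (hG : GoodTriangulation k T) :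
    ∀ i, i ≤ n - 1 → ∃ a b, Q T k i a b := by
  intro i
  induction i with
  | zero =>
    intro _
    exact ⟨0, n, by omega, by omega, le_refl n, by omega, by omega, Or.inr (Or.inl ⟨rfl, rfl⟩)⟩
  | succ i ih =>
    intro hi
    obtain ⟨a, b, hQ⟩ := ih (by omega)
    obtain ⟨ha, hb, hbn, hw, hdiff, hcase⟩ := hQ
    have h2 : a + 2 ≤ b := by omega
    have hd : (a, b) ∈ T.diag ∨ (a = 0 ∧ b = n) := by
      rcases hcase with h | h | h
      · exact Or.inl h
      · exact Or.inr h
      · have : a = k ∧ b = k + 1 := ⟨congrArg Prod.fst h, congrArg Prod.snd h⟩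
        omega
    rcases succ_step T hG ha hb hbn h2 hd with h | h
    · refine ⟨a + 1, b, ?_, hb, hbn, by omega, by omega, ?_⟩
      · rcases h with h | h
        · exact (diag_cross T hG h).1
        · omega
      · rcases h with h | h
        · exact Or.inl h
        · exact Or.inr (Or.inr (by rw [h.1, h.2]))
    · refine ⟨a, b - 1, ha, ?_, by omega, by omega, by omega, ?_⟩
      · rcases h with h | h
        · exact (diag_cross T hG h).2
        · omega
      · rcases h with h | h
        · exact Or.inl h
        · exact Or.inr (Or.inr (by rw [h.1, h.2]))

lemma Q_step (hn : 2 ≤ n) {i a b a₂ b₂ : ℕ} (hi : i ≤ n - 2)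
    (h1 : Q T k i a b) (h2 : Q T k (i + 1) a₂ b₂) :
    (a₂ = a + 1 ∧ b₂ = b) ∨ (a₂ = a ∧ b₂ + 1 = b) := by
  obtain ⟨ha, hb, hbn, hw, hdiff, hcase⟩ := h1
  obtain ⟨ha', hb', hbn', hw', hdiff', hcase'⟩ := h2
  rcases hcase with hD | hE | hK
  · rcases hcase' with hD' | hE' | hK'
    · have n1 := T.noncross (a, b) hD (a₂, b₂) hD'
      have n2 := T.noncross (a₂, b₂) hD' (a, b) hD
      simp only at n1 n2
      omega
    · omega
    · have : a₂ = k ∧ b₂ = k + 1 := ⟨congrArg Prod.fst hK', congrArg Prod.snd hK'⟩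
      omega
  · -- (a,b) = (0,n), i = 0
    obtain ⟨rfl, rfl⟩ := hE
    omega
  · have : a = k ∧ b = k + 1 := ⟨congrArg Prod.fst hK, congrArg Prod.snd hK⟩
    omega

end GoodT

section SSide

variable {n k : ℕ} {S : Finset ℕ}

/-- number of "left" steps among the first `i` steps -/
def aF (S : Finset ℕ) (i : ℕ) : ℕ := ((Finset.range i) ∩ S).card

def bF (n : ℕ) (S : Finset ℕ) (i : ℕ) : ℕ := n - (i - aF S i)

def DS (n : ℕ) (S : Finset ℕ) : Finset (ℕ × ℕ) :=
  (Finset.Icc 1 (n - 2)).image (fun i => (aF S i, bF n S i))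

lemma aF_zero : aF S 0 = 0 := by simp [aF]

lemma aF_succ (S : Finset ℕ) (i : ℕ) :
    aF S (i + 1) = aF S i + (if i ∈ S then 1 else 0) := by
  classical
  unfold aF
  rw [Finset.range_add_one]
  by_cases h : i ∈ S
  · rw [Finset.insert_inter_of_mem h, Finset.card_insert_of_notMem (by simp)]
    simp [h]
  · rw [Finset.insert_inter_of_notMem h]
    simp [h]

lemma aF_mono (S : Finset ℕ) {i j : ℕ} (h : i ≤ j) : aF S i ≤ aF S j :=
  Finset.card_le_card (Finset.inter_subset_inter (Finset.range_subset_range.mpr h) Finset.Subset.rfl)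

lemma aF_le_self (S : Finset ℕ) (i : ℕ) : aF S i ≤ i := by
  have h : (Finset.range i ∩ S).card ≤ (Finset.range i).card :=
    Finset.card_le_card Finset.inter_subset_left
  simpa [aF] using h

lemma aF_top (hS : S ⊆ Finset.range (n - 1)) (hck : S.card = k) : aF S (n - 1) = k := by
  unfold aF
  rw [Finset.inter_eq_right.mpr hS, hck]

lemma rF_mono (S : Finset ℕ) {i j : ℕ} (h : i ≤ j) : i - aF S i ≤ j - aF S j := by
  induction j with
  | zero => omega
  | succ j ih =>
    rcases Nat.lt_or_ge i (j + 1) with h' | h'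
    · have h1 := ih (by omega)
      have h2 := aF_succ S j
      have h3 := aF_le_self S j
      have h4 : aF S j ≤ aF S (j + 1) := aF_mono S (by omega)
      by_cases hjS : j ∈ S <;> simp [hjS] at h2 <;> omega
    · have : i = j + 1 := by omega
      subst this; rfl

lemma point_spec (hn : 2 ≤ n) (hk : k ≤ n - 1) (hS : S ⊆ Finset.range (n - 1))
    (hck : S.card = k) {i : ℕ} (hi : i ≤ n - 1) :
    aF S i ≤ k ∧ k < bF n S i ∧ bF n S i ≤ n ∧
      aF S i + (n - bF n S i) = i ∧ bF n S i - aF S i = n - i := by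
  have h1 := aF_le_self S i
  have h2 := aF_mono S hi
  have h3 := aF_top hS hck
  have h4 := rF_mono S hi
  unfold bF
  omega

lemma mem_DS {p : ℕ × ℕ} :
    p ∈ DS n S ↔ ∃ i, (1 ≤ i ∧ i ≤ n - 2) ∧ p = (aF S i, bF n S i) := by
  simp only [DS, Finset.mem_image, Finset.mem_Icc]
  constructor
  · rintro ⟨i, hi, rfl⟩; exact ⟨i, hi, rfl⟩
  · rintro ⟨i, hi, rfl⟩; exact ⟨i, hi, rfl⟩

lemma ivt (f : ℕ → ℕ) (h0 : f 0 = 0) (hstep : ∀ i, f (i + 1) ≤ f i + 1) (m v : ℕ)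
    (hv : v ≤ f m) : ∃ i, i ≤ m ∧ f i = v := by
  induction m with
  | zero => exact ⟨0, le_refl 0, by omega⟩
  | succ m ih =>
    by_cases h : v ≤ f m
    · obtain ⟨i, hi, hfi⟩ := ih h
      exact ⟨i, by omega, hfi⟩
    · exact ⟨m + 1, le_refl _, by have := hstep m; omega⟩

lemma chords_DS (hn : 2 ≤ n) (hk : k ≤ n - 1) (hS : S ⊆ Finset.range (n - 1))
    (hck : S.card = k) : ∀ p ∈ DS n S, IsChord n p.1 p.2 := by
  intro p hp
  obtain ⟨i, hi, rfl⟩ := mem_DS.mp hp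
  have hps := point_spec hn hk hS hck (i := i) (by omega)
  exact ⟨by omega, by omega, by omega⟩

lemma noncross_DS (hn : 2 ≤ n) (hk : k ≤ n - 1) (hS : S ⊆ Finset.range (n - 1))
    (hck : S.card = k) :
    ∀ p ∈ DS n S, ∀ q ∈ DS n S, ¬(p.1 < q.1 ∧ q.1 < p.2 ∧ p.2 < q.2) := by
  intro p hp q hq
  obtain ⟨i, hi, rfl⟩ := mem_DS.mp hp
  obtain ⟨j, hj, rfl⟩ := mem_DS.mp hq
  simp only
  rintro ⟨c1, _, c3⟩
  rcases Nat.le_total i j with h | h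
  · have := rF_mono S h
    have hpi := point_spec hn hk hS hck (i := i) (by omega)
    have hpj := point_spec hn hk hS hck (i := j) (by omega)
    unfold bF at *
    omega
  · have := aF_mono S h
    omega

lemma maximal_DS (hn : 2 ≤ n) (hk : k ≤ n - 1) (hS : S ⊆ Finset.range (n - 1))
    (hck : S.card = k) :
    ∀ a b : ℕ, IsChord n a b → (a, b) ∉ DS n S →
      ∃ p ∈ DS n S, (p.1 < a ∧ a < p.2 ∧ p.2 < b) ∨ (a < p.1 ∧ p.1 < b ∧ b < p.2) := by
  intro a b hchord hnm
  obtain ⟨hab, hbn, h0n⟩ := hchord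
  have hstep : ∀ i, aF S (i + 1) ≤ aF S i + 1 := by
    intro i
    have h := aF_succ S i
    by_cases hiS : i ∈ S <;> simp [hiS] at h <;> omega
  have hrstep : ∀ i, (fun i => i - aF S i) (i + 1) ≤ (fun i => i - aF S i) i + 1 := by
    intro i
    show i + 1 - aF S (i + 1) ≤ i - aF S i + 1
    have h := aF_succ S i
    have h2 := aF_le_self S i
    by_cases hiS : i ∈ S <;> simp [hiS] at h <;> omega
  have htop := aF_top hS hck
  rcases Nat.lt_or_ge k b with hkb | hkb
  · rcases Nat.lt_or_ge k a with hka | hka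
    · -- a ≥ k+1 : all vertices on the right; pick chord with second coord b - 1
      obtain ⟨i, hi, hfi⟩ := ivt (fun i => i - aF S i) (by simp [aF_zero]) hrstep (n - 1)
        (n - b + 1) (by show n - b + 1 ≤ (n - 1) - aF S (n - 1); omega)
      have hfi' : i - aF S i = n - b + 1 := hfi
      have h1 : 1 ≤ i := by
        rcases Nat.eq_zero_or_pos i with rfl | h
        · rw [aF_zero] at hfi'; omega
        · exact h
      have h2 : i ≤ n - 2 := by
        by_contra hcon
        have hieq : i = n - 1 := by omega
        rw [hieq] at hfi'
        omega
      refine ⟨(aF S i, bF n S i), mem_DS.mpr ⟨i, ⟨h1, h2⟩, rfl⟩, ?_⟩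
      have hps := point_spec hn hk hS hck (i := i) (by omega)
      left
      unfold bF at *
      omega
    · -- a ≤ k < b : same weight chord crosses
      set i := a + (n - b) with hidef
      have h1 : 1 ≤ i := by omega
      have h2 : i ≤ n - 2 := by omega
      have hps := point_spec hn hk hS hck (i := i) (by omega)
      have hne : (aF S i, bF n S i) ≠ (a, b) := by
        intro hcontra
        exact hnm (hcontra ▸ mem_DS.mpr ⟨i, ⟨h1, h2⟩, rfl⟩)
      refine ⟨(aF S i, bF n S i), mem_DS.mpr ⟨i, ⟨h1, h2⟩, rfl⟩, ?_⟩
      simp only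
      have hne' : aF S i ≠ a ∨ bF n S i ≠ b := by
        by_contra hc
        push_neg at hc
        exact hne (by rw [hc.1, hc.2])
      omega
  · -- b ≤ k : all vertices on the left; pick chord with first coord a + 1
    obtain ⟨i, hi, hfi⟩ := ivt (aF S) (aF_zero) hstep (n - 1) (a + 1) (by omega)
    have h1 : 1 ≤ i := by
      rcases Nat.eq_zero_or_pos i with rfl | h
      · rw [aF_zero] at hfi; omega
      · exact h
    have h2 : i ≤ n - 2 := by
      by_contra hcon
      have hieq : i = n - 1 := by omega
      rw [hieq] at hfi
      omega
    refine ⟨(aF S i, bF n S i), mem_DS.mpr ⟨i, ⟨h1, h2⟩, rfl⟩, ?_⟩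
    have hps := point_spec hn hk hS hck (i := i) (by omega)
    right
    omega

def TS (n k : ℕ) (S : Finset ℕ) (hn : 2 ≤ n) (hk : k ≤ n - 1)
    (hS : S ⊆ Finset.range (n - 1)) (hck : S.card = k) : Triangulation n where
  diag := DS n S
  chords := chords_DS hn hk hS hck
  noncross := noncross_DS hn hk hS hck
  maximal := maximal_DS hn hk hS hck

lemma good_TS (hn : 2 ≤ n) (hk : k ≤ n - 1) (hS : S ⊆ Finset.range (n - 1))
    (hck : S.card = k) : GoodTriangulation k (TS n k S hn hk hS hck) := by
  constructor
  · rintro a b c ⟨h1, h2, h3, _, _, hside⟩ hc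
    rcases hside with h | h | h
    · omega
    · omega
    · obtain ⟨i, hi, hpe⟩ := mem_DS.mp h
      have hps := point_spec hn hk hS hck (i := i) (by omega)
      have : a = aF S i ∧ c = bF n S i :=
        ⟨congrArg Prod.fst hpe, congrArg Prod.snd hpe⟩
      omega
  · rintro a b c ⟨h1, h2, h3, _, _, hside⟩ ha
    rcases hside with h | h | h
    · omega
    · omega
    · obtain ⟨i, hi, hpe⟩ := mem_DS.mp h
      have hps := point_spec hn hk hS hck (i := i) (by omega)
      have : a = aF S i ∧ c = bF n S i :=
        ⟨congrArg Prod.fst hpe, congrArg Prod.snd hpe⟩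
      omega

end SSide

section Recover

variable {n k : ℕ} (T : Triangulation n)

/-- the set of indices where the chain takes a "left" step -/
noncomputable def ST {n : ℕ} (T : Triangulation n) (k : ℕ) : Finset ℕ :=
  @Finset.filter _ (fun i => ∃ a b, Q T k i a b ∧ Q T k (i + 1) (a + 1) b)
    (Classical.decPred _) (Finset.range (n - 1))

lemma mem_ST {i : ℕ} :
    i ∈ ST T k ↔ i < n - 1 ∧ ∃ a b, Q T k i a b ∧ Q T k (i + 1) (a + 1) b := by
  rw [ST, @Finset.mem_filter _ _ (Classical.decPred _), Finset.mem_range]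

lemma chain_eq (hn : 2 ≤ n) (hk : k ≤ n - 1) (hG : GoodTriangulation k T) :
    ∀ i, i ≤ n - 1 → ∀ a b, Q T k i a b →
      aF (ST T k) i = a ∧ bF n (ST T k) i = b := by
  intro i
  induction i with
  | zero =>
    intro _ a b hQ
    obtain ⟨_, _, hbn, hw, hdiff, _⟩ := hQ
    constructor
    · rw [aF_zero]; omega
    · show n - (0 - aF (ST T k) 0) = b
      rw [aF_zero]; omega
  | succ i ih =>
    intro hi a₂ b₂ hQ2
    obtain ⟨a, b, hQ1⟩ := Q_exists T hn hk hG i (by omega)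
    obtain ⟨hA, hB⟩ := ih (by omega) a b hQ1
    have hstep := Q_step T hn (by omega) hQ1 hQ2
    have hsucc := aF_succ (ST T k) i
    rcases hstep with ⟨he1, he2⟩ | ⟨he1, he2⟩
    · have hmem : i ∈ ST T k := by
        rw [mem_ST]
        refine ⟨by omega, a, b, hQ1, ?_⟩
        rw [he1, he2] at hQ2
        exact hQ2
      have h1 : aF (ST T k) (i + 1) = a₂ := by
        simp [hmem] at hsucc; omega
      refine ⟨h1, ?_⟩
      show n - (i + 1 - aF (ST T k) (i + 1)) = b₂
      obtain ⟨_, hb2, hbn2, hw2, _, _⟩ := hQ2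
      omega
    · have hnmem : i ∉ ST T k := by
        rw [mem_ST]
        rintro ⟨_, a', b', hQ1', hQ2'⟩
        obtain ⟨hx, hy⟩ := Q_unique T hQ1 hQ1'
        obtain ⟨hx2, hy2⟩ := Q_unique T hQ2 hQ2'
        omega
      have h1 : aF (ST T k) (i + 1) = a₂ := by
        simp [hnmem] at hsucc; omega
      refine ⟨h1, ?_⟩
      show n - (i + 1 - aF (ST T k) (i + 1)) = b₂
      obtain ⟨_, hb2, hbn2, hw2, _, _⟩ := hQ2
      omega

lemma ST_subset : ST T k ⊆ Finset.range (n - 1) := by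
  intro i hi
  rw [Finset.mem_range]
  exact ((mem_ST T).mp hi).1

lemma Q_top (hn : 2 ≤ n) (hk : k ≤ n - 1) : Q T k (n - 1) k (k + 1) :=
  ⟨le_refl k, by omega, by omega, by omega, by omega, Or.inr (Or.inr rfl)⟩

lemma ST_card (hn : 2 ≤ n) (hk : k ≤ n - 1) (hG : GoodTriangulation k T) :
    (ST T k).card = k := by
  have h1 := (chain_eq T hn hk hG (n - 1) (le_refl _) k (k + 1) (Q_top T hn hk)).1
  have h2 : Finset.range (n - 1) ∩ ST T k = ST T k :=
    Finset.inter_eq_right.mpr (ST_subset T)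
  unfold aF at h1
  rw [h2] at h1
  exact h1

lemma DS_ST (hn : 2 ≤ n) (hk : k ≤ n - 1) (hG : GoodTriangulation k T) :
    DS n (ST T k) = T.diag := by
  ext p
  obtain ⟨p1, p2⟩ := p
  constructor
  · intro hp
    obtain ⟨i, hi, hpe⟩ := mem_DS.mp hp
    obtain ⟨a, b, hQ⟩ := Q_exists T hn hk hG i (by omega)
    obtain ⟨hA, hB⟩ := chain_eq T hn hk hG i (by omega) a b hQ
    have e1 : p1 = aF (ST T k) i := congrArg Prod.fst hpe
    have e2 : p2 = bF n (ST T k) i := congrArg Prod.snd hpe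
    obtain ⟨ha, hb, hbn, hw, hdiff, hcase⟩ := hQ
    rcases hcase with h | h | h
    · rw [e1, hA, e2, hB]; exact h
    · omega
    · exfalso
      have : a = k ∧ b = k + 1 := ⟨congrArg Prod.fst h, congrArg Prod.snd h⟩
      omega
  · intro hp
    have hcr := diag_cross T hG hp
    obtain ⟨hc1, hc2, hc3⟩ := T.chords (p1, p2) hp
    simp only at hc1 hc2 hc3 hcr
    have hQ : Q T k (p1 + (n - p2)) p1 p2 :=
      ⟨hcr.1, hcr.2, hc2, rfl, by omega, Or.inl hp⟩
    have hi1 : 1 ≤ p1 + (n - p2) := by omega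
    have hi2 : p1 + (n - p2) ≤ n - 2 := by omega
    obtain ⟨hA, hB⟩ := chain_eq T hn hk hG (p1 + (n - p2)) (by omega) p1 p2 hQ
    exact mem_DS.mpr ⟨p1 + (n - p2), ⟨hi1, hi2⟩, by rw [hA, hB]⟩

end Recover

lemma DS_inj {n k : ℕ} {S S' : Finset ℕ} (hn : 2 ≤ n) (hk : k ≤ n - 1)
    (hS : S ⊆ Finset.range (n - 1)) (hck : S.card = k)
    (hS' : S' ⊆ Finset.range (n - 1)) (hck' : S'.card = k)
    (h : DS n S = DS n S') : S = S' := by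
  have haF : ∀ i, i ≤ n - 1 → aF S i = aF S' i := by
    intro i hi
    rcases Nat.eq_zero_or_pos i with rfl | h1
    · rw [aF_zero, aF_zero]
    rcases Nat.lt_or_ge i (n - 1) with h2 | h2
    · have hp : (aF S i, bF n S i) ∈ DS n S' := by
        rw [← h]; exact mem_DS.mpr ⟨i, ⟨h1, by omega⟩, rfl⟩
      obtain ⟨j, hj, hpe⟩ := mem_DS.mp hp
      have e1 : aF S i = aF S' j := congrArg Prod.fst hpe
      have e2 : bF n S i = bF n S' j := congrArg Prod.snd hpe
      have ps1 := point_spec hn hk hS hck (i := i) (by omega)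
      have ps2 := point_spec hn hk hS' hck' (i := j) (by omega)
      have hij : i = j := by omega
      rw [← hij] at e1
      exact e1
    · have hie : i = n - 1 := by omega
      subst hie
      rw [aF_top hS hck, aF_top hS' hck']
  ext j
  by_cases hj : j < n - 1
  · have e0 := haF j (by omega)
    have e1 := haF (j + 1) (by omega)
    have s0 := aF_succ S j
    have s1 := aF_succ S' j
    by_cases h1 : j ∈ S <;> by_cases h2 : j ∈ S' <;>
      simp only [h1, h2, if_true, if_false, iff_true, iff_false] at s0 s1 ⊢ <;>
      omega
  · constructor
    · intro hmem; exact absurd (Finset.mem_range.mp (hS hmem)) hj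
    · intro hmem; exact absurd (Finset.mem_range.mp (hS' hmem)) hj

end GTAux


/-- The number of triangulations of the convex `(n+1)`-gon with no triangle
contained in `{0,...,k}` and none contained in `{k+1,...,n}` is the binomial
coefficient `C(n-1, k)`. -/
theorem card_good_triangulations (n k : ℕ) (hn : 2 ≤ n) (hk : k ≤ n - 1) :
    Nat.card {T : Triangulation n // GoodTriangulation k T} =
      Nat.choose (n - 1) k := by
  classical
  have hcard : ∀ S ∈ (Finset.range (n - 1)).powersetCard k,
      S ⊆ Finset.range (n - 1) ∧ S.card = k := by
    intro S hS
    rwa [Finset.mem_powersetCard] at hS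
  let F : {S : Finset ℕ // S ∈ (Finset.range (n - 1)).powersetCard k} →
      {T : Triangulation n // GoodTriangulation k T} :=
    fun S => ⟨GTAux.TS n k S.1 hn hk (hcard S.1 S.2).1 (hcard S.1 S.2).2,
              GTAux.good_TS hn hk (hcard S.1 S.2).1 (hcard S.1 S.2).2⟩
  have hinj : Function.Injective F := by
    rintro ⟨S, hS⟩ ⟨S', hS'⟩ hFeq
    have hdiag : GTAux.DS n S = GTAux.DS n S' := by
      have := congrArg (fun x => (x.1).diag) hFeq
      exact this
    exact Subtype.ext (GTAux.DS_inj hn hk (hcard S hS).1 (hcard S hS).2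
      (hcard S' hS').1 (hcard S' hS').2 hdiag)
  have hsurj : Function.Surjective F := by
    rintro ⟨T, hG⟩
    refine ⟨⟨GTAux.ST T k, Finset.mem_powersetCard.mpr
      ⟨GTAux.ST_subset T, GTAux.ST_card T hn hk hG⟩⟩, ?_⟩
    apply Subtype.ext
    apply GTAux.triang_ext
    show GTAux.DS n (GTAux.ST T k) = T.diag
    exact GTAux.DS_ST T hn hk hG
  rw [← Nat.card_eq_of_bijective F ⟨hinj, hsurj⟩]
  rw [Nat.card_eq_fintype_card, Fintype.card_coe, Finset.card_powersetCard,
    Finset.card_range]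
end

section
/- Let D be a poset and n ≥ 4. Given a compatible family of (n−1)-simplices τ_0, ..., τ_n of Mat(D) (i.e., d_i τ_j = d_{j−1} τ_i for all 0 ≤ i < j ≤ n), there exists a unique n-simplex τ̃ of Mat(D) with d_i τ̃ = τ_i for all i. In other words, Mat(D) is 3-coskeletal (in fact boundaries in dimension ≥ 4 fill uniquely). -/
structure MSimplex (D : Type*) [Preorder D] (n : ℕ) where
  k : ℕ
  hk : k ≤ n + 1
  mat : ∀ i j : ℕ, i < k → j < n + 1 - k → D
  mono : ∀ (a a' b b' : ℕ) (ha : a < k) (ha' : a' < k) (hb : b < n + 1 - k)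
    (hb' : b' < n + 1 - k), a ≤ a' → b' ≤ b → mat a b ha hb ≤ mat a' b' ha' hb'

def MSimplex.face {D : Type*} [Preorder D] {n : ℕ} (i : ℕ) (σ : MSimplex D (n + 1)) :
    MSimplex D n :=
  if h : min i (n + 1) < σ.k then
    { k := σ.k - 1
      hk := by have h2 := σ.hk; omega
      mat := fun a b ha hb =>
        σ.mat (if a < i then a else a + 1) b (by split <;> omega) (by omega)
      mono := by
        intro a a' b b' ha ha' hb hb' h1 h2
        exact σ.mono _ _ _ _ _ _ _ _ (by split_ifs <;> omega) h2 }
  else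
    { k := σ.k
      hk := by have h2 := σ.hk; omega
      mat := fun a b ha hb =>
        σ.mat a (if b < i - σ.k then b else b + 1) ha (by split <;> omega)
      mono := by
        intro a a' b b' ha ha' hb hb' h1 h2
        exact σ.mono _ _ _ _ _ _ _ _ h1 (by split_ifs <;> omega) }

def MSimplex.degen {D : Type*} [Preorder D] {n : ℕ} (i : ℕ) (σ : MSimplex D n) :
    MSimplex D (n + 1) :=
  if h : min i n < σ.k then
    { k := σ.k + 1
      hk := by have h2 := σ.hk; omega
      mat := fun a b ha hb =>
        σ.mat (if a ≤ min i (σ.k - 1) then a else a - 1) b (by split <;> omega) (by omega)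
      mono := by
        intro a a' b b' ha ha' hb hb' h1 h2
        exact σ.mono _ _ _ _ _ _ _ _ (by split_ifs <;> omega) h2 }
  else
    { k := σ.k
      hk := by have h2 := σ.hk; omega
      mat := fun a b ha hb =>
        σ.mat a (if b ≤ min (i - σ.k) (n - σ.k) then b else b - 1) ha (by split <;> omega)
      mono := by
        intro a a' b b' ha ha' hb hb' h1 h2
        exact σ.mono _ _ _ _ _ _ _ _ h1 (by split_ifs <;> omega) }

theorem MSimplex.ext' {D : Type*} [Preorder D] {n : ℕ} {σ τ : MSimplex D n}
    (h : σ.k = τ.k)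
    (hm : ∀ a b (ha : a < σ.k) (hb : b < n + 1 - σ.k),
      σ.mat a b ha hb = τ.mat a b (h ▸ ha) (h ▸ hb)) : σ = τ := by
  obtain ⟨k1, hk1, m1, mo1⟩ := σ
  obtain ⟨k2, hk2, m2, mo2⟩ := τ
  simp only at h
  subst h
  simp only [mk.injEq, heq_eq_eq, true_and]
  funext a b ha hb
  exact hm a b ha hb

theorem MSimplex.mat_congr {D : Type*} [Preorder D] {n : ℕ} {σ τ : MSimplex D n}
    (h : σ = τ) (a b : ℕ) (ha : a < σ.k) (hb : b < n + 1 - σ.k) :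
    σ.mat a b ha hb = τ.mat a b (h ▸ ha) (h ▸ hb) := by subst h; rfl

theorem MSimplex.mat_index_congr {D : Type*} [Preorder D] {n : ℕ} (σ : MSimplex D n)
    {x x' y y' : ℕ} (hx : x = x') (hy : y = y')
    (h1 : x < σ.k) (h2 : y < n + 1 - σ.k) (h1' : x' < σ.k) (h2' : y' < n + 1 - σ.k) :
    σ.mat x y h1 h2 = σ.mat x' y' h1' h2' := by subst hx; subst hy; rfl

theorem MSimplex.face_k {D : Type*} [Preorder D] {n : ℕ} (i : ℕ) (σ : MSimplex D (n + 1)) :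
    (σ.face i).k = if min i (n + 1) < σ.k then σ.k - 1 else σ.k := by
  rw [MSimplex.face]; split <;> rfl

theorem MSimplex.face_mat_pos {D : Type*} [Preorder D] {n : ℕ} (i : ℕ) (σ : MSimplex D (n + 1))
    (h : min i (n + 1) < σ.k) (a b : ℕ) (ha : a < (σ.face i).k) (hb : b < n + 1 - (σ.face i).k)
    (ha' : (if a < i then a else a + 1) < σ.k) (hb' : b < n + 2 - σ.k) :
    (σ.face i).mat a b ha hb = σ.mat (if a < i then a else a + 1) b ha' hb' := by
  rw [MSimplex.mat_congr (show σ.face i = _ from dif_pos h)]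

theorem MSimplex.face_mat_neg {D : Type*} [Preorder D] {n : ℕ} (i : ℕ) (σ : MSimplex D (n + 1))
    (h : ¬ min i (n + 1) < σ.k) (a b : ℕ) (ha : a < (σ.face i).k) (hb : b < n + 1 - (σ.face i).k)
    (ha' : a < σ.k) (hb' : (if b < i - σ.k then b else b + 1) < n + 2 - σ.k) :
    (σ.face i).mat a b ha hb = σ.mat a (if b < i - σ.k then b else b + 1) ha' hb' := by
  rw [MSimplex.mat_congr (show σ.face i = _ from dif_neg h)]

/-- the entry at `(a, b)` of the prospective filler, read off from the `i`-th face `τ i`. -/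
def faceEntry {D : Type*} [Preorder D] {m : ℕ} (τ : ℕ → MSimplex D (m + 1)) (K : ℕ)
    (hK : ∀ i ≤ m + 2, (τ i).k = if i < K then K - 1 else K)
    (i a b : ℕ) (hi : i ≤ m + 2) (ha : a < K) (hb : b < m + 3 - K)
    (hia : i ≠ a) (hib : i ≠ K + b) : D :=
  if h : i < K then
    (τ i).mat (if a < i then a else a - 1) b
      (by rw [hK i hi, if_pos h]; split <;> omega)
      (by rw [hK i hi, if_pos h]; omega)
  else
    (τ i).mat a (if b < i - K then b else b - 1)
      (by rw [hK i hi, if_neg h]; omega)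
      (by rw [hK i hi, if_neg h]; split <;> omega)

theorem faceEntry_pos {D : Type*} [Preorder D] {m : ℕ} (τ : ℕ → MSimplex D (m + 1)) (K : ℕ)
    (hK : ∀ i ≤ m + 2, (τ i).k = if i < K then K - 1 else K)
    (i a b : ℕ) (hi : i ≤ m + 2) (ha : a < K) (hb : b < m + 3 - K)
    (hia : i ≠ a) (hib : i ≠ K + b) (h : i < K)
    (p1 : (if a < i then a else a - 1) < (τ i).k) (p2 : b < m + 2 - (τ i).k) :
    faceEntry τ K hK i a b hi ha hb hia hib = (τ i).mat (if a < i then a else a - 1) b p1 p2 := by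
  rw [faceEntry, dif_pos h]

theorem faceEntry_neg {D : Type*} [Preorder D] {m : ℕ} (τ : ℕ → MSimplex D (m + 1)) (K : ℕ)
    (hK : ∀ i ≤ m + 2, (τ i).k = if i < K then K - 1 else K)
    (i a b : ℕ) (hi : i ≤ m + 2) (ha : a < K) (hb : b < m + 3 - K)
    (hia : i ≠ a) (hib : i ≠ K + b) (h : ¬ i < K)
    (p1 : a < (τ i).k) (p2 : (if b < i - K then b else b - 1) < m + 2 - (τ i).k) :
    faceEntry τ K hK i a b hi ha hb hia hib
      = (τ i).mat a (if b < i - K then b else b - 1) p1 p2 := by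
  rw [faceEntry, dif_neg h]

def pick3 (x1 x2 : ℕ) : ℕ :=
  if x1 ≠ 0 ∧ x2 ≠ 0 then 0 else if x1 ≠ 1 ∧ x2 ≠ 1 then 1 else 2

theorem pick3_spec (x1 x2 : ℕ) (h : x1 ≠ x2) :
    pick3 x1 x2 ≤ 2 ∧ pick3 x1 x2 ≠ x1 ∧ pick3 x1 x2 ≠ x2 := by
  unfold pick3; split_ifs <;> omega

def pick5 (x1 x2 x3 x4 : ℕ) : ℕ :=
  if x1 ≠ 0 ∧ x2 ≠ 0 ∧ x3 ≠ 0 ∧ x4 ≠ 0 then 0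
  else if x1 ≠ 1 ∧ x2 ≠ 1 ∧ x3 ≠ 1 ∧ x4 ≠ 1 then 1
  else if x1 ≠ 2 ∧ x2 ≠ 2 ∧ x3 ≠ 2 ∧ x4 ≠ 2 then 2
  else if x1 ≠ 3 ∧ x2 ≠ 3 ∧ x3 ≠ 3 ∧ x4 ≠ 3 then 3
  else 4

theorem pick5_spec (x1 x2 x3 x4 : ℕ) :
    pick5 x1 x2 x3 x4 ≤ 4 ∧ pick5 x1 x2 x3 x4 ≠ x1 ∧ pick5 x1 x2 x3 x4 ≠ x2 ∧
      pick5 x1 x2 x3 x4 ≠ x3 ∧ pick5 x1 x2 x3 x4 ≠ x4 := by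
  unfold pick5; split_ifs <;> omega
set_option maxHeartbeats 1000000 in
theorem faceEntry_eq {D : Type*} [Preorder D] {m : ℕ} (hm : 2 ≤ m)
    (τ : ℕ → MSimplex D (m + 1)) (K : ℕ)
    (hK : ∀ i ≤ m + 2, (τ i).k = if i < K then K - 1 else K)
    (compat : ∀ i j : ℕ, i < j → j ≤ m + 2 →
      MSimplex.face i (τ j) = MSimplex.face (j - 1) (τ i))
    (i j a b : ℕ) (hij : i < j) (hj : j ≤ m + 2) (ha : a < K) (hb : b < m + 3 - K)
    (hia : i ≠ a) (hib : i ≠ K + b) (hja : j ≠ a) (hjb : j ≠ K + b) :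
    faceEntry τ K hK i a b (by omega) ha hb hia hib
      = faceEntry τ K hK j a b hj ha hb hja hjb := by
  have hi : i ≤ m + 2 := by omega
  have H := compat i j hij hj
  rcases lt_or_ge j K with hjK | hjK
  · -- both are row faces
    have hiK : i < K := by omega
    have hkj : (τ j).k = K - 1 := by rw [hK j hj, if_pos hjK]
    have hki : (τ i).k = K - 1 := by rw [hK i hi, if_pos hiK]
    have hfkj : (MSimplex.face i (τ j)).k = K - 2 := by
      rw [MSimplex.face_k, hkj, if_pos (by omega)]; omega
    have hfki : (MSimplex.face (j - 1) (τ i)).k = K - 2 := by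
      rw [MSimplex.face_k, hki, if_pos (by omega)]; omega
    obtain ⟨c, hc⟩ : ∃ x, x = if a < i then a else if a < j then a - 1 else a - 2 := ⟨_, rfl⟩
    have h1 : c < (MSimplex.face i (τ j)).k := by rw [hfkj, hc]; split_ifs <;> omega
    have h2 : b < m + 1 - (MSimplex.face i (τ j)).k := by rw [hfkj]; omega
    have h1' : c < (MSimplex.face (j - 1) (τ i)).k := by rw [hfki, hc]; split_ifs <;> omega
    have h2' : b < m + 1 - (MSimplex.face (j - 1) (τ i)).k := by rw [hfki]; omega
    have E1 := MSimplex.face_mat_pos i (τ j) (by omega) c b h1 h2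
      (by rw [hkj, hc]; split_ifs <;> omega) (by rw [hkj]; omega)
    have E2 := MSimplex.face_mat_pos (j - 1) (τ i) (by omega) c b h1' h2'
      (by rw [hki, hc]; split_ifs <;> omega) (by rw [hki]; omega)
    have E0 : (MSimplex.face i (τ j)).mat c b h1 h2
        = (MSimplex.face (j - 1) (τ i)).mat c b h1' h2' :=
      MSimplex.mat_congr H c b h1 h2
    rw [faceEntry_pos τ K hK i a b hi ha hb hia hib hiK
        (by rw [hki]; split_ifs <;> omega) (by rw [hki]; omega),
      faceEntry_pos τ K hK j a b hj ha hb hja hjb hjK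
        (by rw [hkj]; split_ifs <;> omega) (by rw [hkj]; omega)]
    have T1 : (τ i).mat (if a < i then a else a - 1) b
        (by rw [hki]; split_ifs <;> omega) (by rw [hki]; omega)
        = (τ i).mat (if c < j - 1 then c else c + 1) b
        (by rw [hki, hc]; split_ifs <;> omega) (by rw [hki]; omega) :=
      MSimplex.mat_index_congr _ (by rw [hc]; split_ifs <;> omega) rfl _ _ _ _
    have T2 : (τ j).mat (if c < i then c else c + 1) b
        (by rw [hkj, hc]; split_ifs <;> omega) (by rw [hkj]; omega)
        = (τ j).mat (if a < j then a else a - 1) b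
        (by rw [hkj]; split_ifs <;> omega) (by rw [hkj]; omega) :=
      MSimplex.mat_index_congr _ (by rw [hc]; split_ifs <;> omega) rfl _ _ _ _
    exact T1.trans (E2.symm.trans (E0.symm.trans (E1.trans T2)))
  · rcases lt_or_ge i K with hiK | hiK
    · -- i is a row face, j is a column face
      have hkj : (τ j).k = K := by rw [hK j hj, if_neg (by omega)]
      have hki : (τ i).k = K - 1 := by rw [hK i hi, if_pos hiK]
      have hfkj : (MSimplex.face i (τ j)).k = K - 1 := by
        rw [MSimplex.face_k, hkj, if_pos (by omega)]
      have hfki : (MSimplex.face (j - 1) (τ i)).k = K - 1 := by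
        rw [MSimplex.face_k, hki, if_neg (by omega)]
      obtain ⟨c, hc⟩ : ∃ x, x = if a < i then a else a - 1 := ⟨_, rfl⟩
      obtain ⟨d, hd⟩ : ∃ x, x = if b < j - K then b else b - 1 := ⟨_, rfl⟩
      have h1 : c < (MSimplex.face i (τ j)).k := by rw [hfkj, hc]; split_ifs <;> omega
      have h2 : d < m + 1 - (MSimplex.face i (τ j)).k := by
        rw [hfkj, hd]; split_ifs <;> omega
      have h1' : c < (MSimplex.face (j - 1) (τ i)).k := by rw [hfki, hc]; split_ifs <;> omega
      have h2' : d < m + 1 - (MSimplex.face (j - 1) (τ i)).k := by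
        rw [hfki, hd]; split_ifs <;> omega
      have E1 := MSimplex.face_mat_pos i (τ j) (by omega) c d h1 h2
        (by rw [hkj, hc]; split_ifs <;> omega) (by rw [hkj, hd]; split_ifs <;> omega)
      have E2 := MSimplex.face_mat_neg (j - 1) (τ i) (by omega) c d h1' h2'
        (by rw [hki, hc]; split_ifs <;> omega) (by rw [hki, hd]; split_ifs <;> omega)
      have E0 : (MSimplex.face i (τ j)).mat c d h1 h2
          = (MSimplex.face (j - 1) (τ i)).mat c d h1' h2' :=
        MSimplex.mat_congr H c d h1 h2
      rw [faceEntry_pos τ K hK i a b hi ha hb hia hib hiK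
          (by rw [hki]; split_ifs <;> omega) (by rw [hki]; omega),
        faceEntry_neg τ K hK j a b hj ha hb hja hjb (by omega)
          (by rw [hkj]; omega) (by rw [hkj]; split_ifs <;> omega)]
      have T1 : (τ i).mat (if a < i then a else a - 1) b
          (by rw [hki]; split_ifs <;> omega) (by rw [hki]; omega)
          = (τ i).mat c (if d < (j - 1) - (τ i).k then d else d + 1)
          (by rw [hki, hc]; split_ifs <;> omega) (by rw [hki, hd]; split_ifs <;> omega) :=
        MSimplex.mat_index_congr _ hc.symm (by rw [hd, hki]; split_ifs <;> omega) _ _ _ _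
      have T2 : (τ j).mat (if c < i then c else c + 1) d
          (by rw [hkj, hc]; split_ifs <;> omega) (by rw [hkj, hd]; split_ifs <;> omega)
          = (τ j).mat a (if b < j - K then b else b - 1)
          (by rw [hkj]; omega) (by rw [hkj]; split_ifs <;> omega) :=
        MSimplex.mat_index_congr _ (show (if c < i then c else c + 1) = a by
          rw [hc]; split_ifs <;> omega) hd _ _ _ _
      exact T1.trans (E2.symm.trans (E0.symm.trans (E1.trans T2)))
    · -- both are column faces
      have hkj : (τ j).k = K := by rw [hK j hj, if_neg (by omega)]
      have hki : (τ i).k = K := by rw [hK i hi, if_neg (by omega)]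
      have hfkj : (MSimplex.face i (τ j)).k = K := by
        rw [MSimplex.face_k, hkj, if_neg (by omega)]
      have hfki : (MSimplex.face (j - 1) (τ i)).k = K := by
        rw [MSimplex.face_k, hki, if_neg (by omega)]
      obtain ⟨d, hd⟩ : ∃ x, x = if b < i - K then b else if b < j - K then b - 1 else b - 2 :=
        ⟨_, rfl⟩
      have h1 : a < (MSimplex.face i (τ j)).k := by rw [hfkj]; omega
      have h2 : d < m + 1 - (MSimplex.face i (τ j)).k := by
        rw [hfkj, hd]; split_ifs <;> omega
      have h1' : a < (MSimplex.face (j - 1) (τ i)).k := by rw [hfki]; omega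
      have h2' : d < m + 1 - (MSimplex.face (j - 1) (τ i)).k := by
        rw [hfki, hd]; split_ifs <;> omega
      have E1 := MSimplex.face_mat_neg i (τ j) (by omega) a d h1 h2
        (by rw [hkj]; omega) (by rw [hkj, hd]; split_ifs <;> omega)
      have E2 := MSimplex.face_mat_neg (j - 1) (τ i) (by omega) a d h1' h2'
        (by rw [hki]; omega) (by rw [hki, hd]; split_ifs <;> omega)
      have E0 : (MSimplex.face i (τ j)).mat a d h1 h2
          = (MSimplex.face (j - 1) (τ i)).mat a d h1' h2' :=
        MSimplex.mat_congr H a d h1 h2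
      rw [faceEntry_neg τ K hK i a b hi ha hb hia hib (by omega)
          (by rw [hki]; omega) (by rw [hki]; split_ifs <;> omega),
        faceEntry_neg τ K hK j a b hj ha hb hja hjb (by omega)
          (by rw [hkj]; omega) (by rw [hkj]; split_ifs <;> omega)]
      have T1 : (τ i).mat a (if b < i - K then b else b - 1)
          (by rw [hki]; omega) (by rw [hki]; split_ifs <;> omega)
          = (τ i).mat a (if d < (j - 1) - (τ i).k then d else d + 1)
          (by rw [hki]; omega) (by rw [hki, hd]; split_ifs <;> omega) :=
        MSimplex.mat_index_congr _ rfl (by rw [hd, hki]; split_ifs <;> omega) _ _ _ _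
      have T2 : (τ j).mat a (if d < i - (τ j).k then d else d + 1)
          (by rw [hkj]; omega) (by rw [hkj, hd]; split_ifs <;> omega)
          = (τ j).mat a (if b < j - K then b else b - 1)
          (by rw [hkj]; omega) (by rw [hkj]; split_ifs <;> omega) :=
        MSimplex.mat_index_congr _ rfl (by rw [hd, hkj]; split_ifs <;> omega) _ _ _ _
      exact T1.trans (E2.symm.trans (E0.symm.trans (E1.trans T2)))
theorem faceEntry_eq' {D : Type*} [Preorder D] {m : ℕ} (hm : 2 ≤ m)
    (τ : ℕ → MSimplex D (m + 1)) (K : ℕ)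
    (hK : ∀ i ≤ m + 2, (τ i).k = if i < K then K - 1 else K)
    (compat : ∀ i j : ℕ, i < j → j ≤ m + 2 →
      MSimplex.face i (τ j) = MSimplex.face (j - 1) (τ i))
    (i j a b : ℕ) (hi : i ≤ m + 2) (hj : j ≤ m + 2) (ha : a < K) (hb : b < m + 3 - K)
    (hia : i ≠ a) (hib : i ≠ K + b) (hja : j ≠ a) (hjb : j ≠ K + b) :
    faceEntry τ K hK i a b hi ha hb hia hib
      = faceEntry τ K hK j a b hj ha hb hja hjb := by
  rcases lt_trichotomy i j with h | h | h
  · exact faceEntry_eq hm τ K hK compat i j a b h hj ha hb hia hib hja hjb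
  · subst h; rfl
  · exact (faceEntry_eq hm τ K hK compat j i a b h hi ha hb hja hjb hia hib).symm

theorem faceEntry_mono {D : Type*} [Preorder D] {m : ℕ}
    (τ : ℕ → MSimplex D (m + 1)) (K : ℕ)
    (hK : ∀ i ≤ m + 2, (τ i).k = if i < K then K - 1 else K)
    (i a a' b b' : ℕ) (hi : i ≤ m + 2) (ha : a < K) (hb : b < m + 3 - K)
    (ha' : a' < K) (hb' : b' < m + 3 - K)
    (hia : i ≠ a) (hib : i ≠ K + b) (hia' : i ≠ a') (hib' : i ≠ K + b')
    (h1 : a ≤ a') (h2 : b' ≤ b) :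
    faceEntry τ K hK i a b hi ha hb hia hib
      ≤ faceEntry τ K hK i a' b' hi ha' hb' hia' hib' := by
  by_cases h : i < K
  · rw [faceEntry_pos τ K hK i a b hi ha hb hia hib h
        (by rw [hK i hi, if_pos h]; split_ifs <;> omega) (by rw [hK i hi, if_pos h]; omega),
      faceEntry_pos τ K hK i a' b' hi ha' hb' hia' hib' h
        (by rw [hK i hi, if_pos h]; split_ifs <;> omega) (by rw [hK i hi, if_pos h]; omega)]
    exact (τ i).mono _ _ _ _ _ _ _ _ (by split_ifs <;> omega) h2
  · rw [faceEntry_neg τ K hK i a b hi ha hb hia hib h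
        (by rw [hK i hi, if_neg h]; omega) (by rw [hK i hi, if_neg h]; split_ifs <;> omega),
      faceEntry_neg τ K hK i a' b' hi ha' hb' hia' hib' h
        (by rw [hK i hi, if_neg h]; omega) (by rw [hK i hi, if_neg h]; split_ifs <;> omega)]
    exact (τ i).mono _ _ _ _ _ _ _ _ h1 (by split_ifs <;> omega)

def tfill {D : Type*} [Preorder D] {m : ℕ} (hm : 2 ≤ m) (τ : ℕ → MSimplex D (m + 1)) (K : ℕ)
    (hK : ∀ i ≤ m + 2, (τ i).k = if i < K then K - 1 else K) (hK3 : K ≤ m + 3)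
    (compat : ∀ i j : ℕ, i < j → j ≤ m + 2 →
      MSimplex.face i (τ j) = MSimplex.face (j - 1) (τ i)) : MSimplex D (m + 2) where
  k := K
  hk := hK3
  mat := fun a b ha hb =>
    faceEntry τ K hK (pick3 a (K + b)) a b
      (by have := pick3_spec a (K + b) (by omega); omega) ha hb
      (pick3_spec a (K + b) (by omega)).2.1 (pick3_spec a (K + b) (by omega)).2.2
  mono := by
    intro a a' b b' ha ha' hb hb' h1 h2
    obtain ⟨p5, pa, pa', pb, pb'⟩ := pick5_spec a a' (K + b) (K + b')
    refine le_of_eq_of_le (faceEntry_eq' hm τ K hK compat _ (pick5 a a' (K + b) (K + b'))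
      a b _ (by omega) ha hb _ _ pa pb) ?_
    refine le_of_le_of_eq ?_ (faceEntry_eq' hm τ K hK compat (pick5 a a' (K + b) (K + b'))
      _ a' b' (by omega) _ ha' hb' pa' pb' _ _)
    exact faceEntry_mono τ K hK _ a a' b b' (by omega) ha hb ha' hb' pa pb pa' pb' h1 h2

theorem tfill_mat {D : Type*} [Preorder D] {m : ℕ} (hm : 2 ≤ m) (τ : ℕ → MSimplex D (m + 1))
    (K : ℕ) (hK : ∀ i ≤ m + 2, (τ i).k = if i < K then K - 1 else K) (hK3 : K ≤ m + 3)
    (compat : ∀ i j : ℕ, i < j → j ≤ m + 2 →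
      MSimplex.face i (τ j) = MSimplex.face (j - 1) (τ i))
    (i a b : ℕ) (hi : i ≤ m + 2) (ha : a < K) (hb : b < m + 3 - K)
    (hia : i ≠ a) (hib : i ≠ K + b)
    (ha2 : a < (tfill hm τ K hK hK3 compat).k)
    (hb2 : b < m + 3 - (tfill hm τ K hK hK3 compat).k) :
    (tfill hm τ K hK hK3 compat).mat a b ha2 hb2
      = faceEntry τ K hK i a b hi ha hb hia hib := by
  obtain ⟨p3, pa, pc⟩ := pick3_spec a (K + b) (by omega)
  exact faceEntry_eq' hm τ K hK compat (pick3 a (K + b)) i a b (by omega) hi ha hb pa pc hia hib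
theorem tfill_face {D : Type*} [Preorder D] {m : ℕ} (hm : 2 ≤ m) (τ : ℕ → MSimplex D (m + 1))
    (K : ℕ) (hK : ∀ i ≤ m + 2, (τ i).k = if i < K then K - 1 else K) (hK3 : K ≤ m + 3)
    (compat : ∀ i j : ℕ, i < j → j ≤ m + 2 →
      MSimplex.face i (τ j) = MSimplex.face (j - 1) (τ i))
    (j : ℕ) (hj : j ≤ m + 2) :
    MSimplex.face j (tfill hm τ K hK hK3 compat) = τ j := by
  have htk : (tfill hm τ K hK hK3 compat).k = K := rfl
  have hfk : (MSimplex.face j (tfill hm τ K hK hK3 compat)).k = (τ j).k := by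
    rw [MSimplex.face_k, htk, hK j hj]
    split_ifs <;> omega
  refine MSimplex.ext' hfk ?_
  intro a' b' ha' hb'
  rcases lt_or_ge j K with hjK | hjK
  · -- j is a row face
    have hkj : (τ j).k = K - 1 := by rw [hK j hj, if_pos hjK]
    have haK : a' < K - 1 := by rw [hfk, hkj] at ha'; exact ha'
    have hbK : b' < m + 3 - K := by rw [hfk, hkj] at hb'; omega
    have E := MSimplex.face_mat_pos j (tfill hm τ K hK hK3 compat) (by rw [htk]; omega)
      a' b' ha' hb' (by rw [htk]; split_ifs <;> omega) (by rw [htk]; omega)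
    refine E.trans ?_
    have E2 := tfill_mat hm τ K hK hK3 compat j (if a' < j then a' else a' + 1) b' hj
      (by split_ifs <;> omega) (by omega) (by split_ifs <;> omega) (by omega)
      (by rw [htk]; split_ifs <;> omega) (by rw [htk]; omega)
    refine E2.trans ?_
    refine (faceEntry_pos τ K hK j _ b' hj (by split_ifs <;> omega) (by omega)
      (by split_ifs <;> omega) (by omega) hjK
      (by rw [hkj]; split_ifs <;> omega) (by rw [hkj]; omega)).trans ?_
    exact MSimplex.mat_index_congr (τ j) (by split_ifs <;> omega) rfl _ _
      (by rw [hkj]; omega) (by rw [hkj]; omega)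
  · -- j is a column face
    have hkj : (τ j).k = K := by rw [hK j hj, if_neg (by omega)]
    have haK : a' < K := by rw [hfk, hkj] at ha'; exact ha'
    have hbK : b' < m + 2 - K := by rw [hfk, hkj] at hb'; omega
    have E := MSimplex.face_mat_neg j (tfill hm τ K hK hK3 compat) (by rw [htk]; omega)
      a' b' ha' hb' (by rw [htk]; omega) (by rw [htk]; split_ifs <;> omega)
    refine E.trans ?_
    have E2 := tfill_mat hm τ K hK hK3 compat j a'
      (if b' < j - K then b' else b' + 1) hj
      haK (by split_ifs <;> omega) (by omega) (by split_ifs <;> omega)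
      (by rw [htk]; omega) (by rw [htk]; split_ifs <;> omega)
    refine E2.trans ?_
    refine (faceEntry_neg τ K hK j a' (if b' < j - K then b' else b' + 1) hj haK
      (by split_ifs <;> omega) (by omega) (by split_ifs <;> omega) (by omega)
      (by rw [hkj]; omega) (by rw [hkj]; split_ifs <;> omega)).trans ?_
    exact MSimplex.mat_index_congr (τ j) rfl (by split_ifs <;> omega)
      _ _ (by rw [hkj]; omega) (by rw [hkj]; omega)

theorem tfill_unique {D : Type*} [Preorder D] {m : ℕ} (hm : 2 ≤ m) (τ : ℕ → MSimplex D (m + 1))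
    (K : ℕ) (hK : ∀ i ≤ m + 2, (τ i).k = if i < K then K - 1 else K) (hK3 : K ≤ m + 3)
    (compat : ∀ i j : ℕ, i < j → j ≤ m + 2 →
      MSimplex.face i (τ j) = MSimplex.face (j - 1) (τ i))
    (t' : MSimplex D (m + 2)) (hf : ∀ i ≤ m + 2, MSimplex.face i t' = τ i) :
    t' = tfill hm τ K hK hK3 compat := by
  have hbt := t'.hk
  have hk0 := congrArg MSimplex.k (hf 0 (by omega))
  have hkm := congrArg MSimplex.k (hf (m + 2) (by omega))
  rw [MSimplex.face_k, hK 0 (by omega)] at hk0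
  rw [MSimplex.face_k, hK (m + 2) (by omega)] at hkm
  have htk : t'.k = K := by split_ifs at hk0 hkm <;> omega
  refine MSimplex.ext' (htk.trans rfl) ?_
  intro a b ha hb
  have haK : a < K := by omega
  have hbK : b < m + 3 - K := by omega
  obtain ⟨p3, pa, pc⟩ := pick3_spec a (K + b) (by omega)
  obtain ⟨i, hidef⟩ : ∃ x, x = pick3 a (K + b) := ⟨_, rfl⟩
  rw [← hidef] at pa pc
  have hi : i ≤ m + 2 := by omega
  have Hf := hf i hi
  have goalrhs : (tfill hm τ K hK hK3 compat).mat a b (htk ▸ ha) (htk ▸ hb)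
      = faceEntry τ K hK i a b hi haK hbK pa pc := by
    rw [tfill_mat hm τ K hK hK3 compat i a b hi haK hbK pa pc]
  refine Eq.trans ?_ goalrhs.symm
  rcases lt_or_ge i K with hiK | hiK
  · -- row face
    obtain ⟨c, hc⟩ : ∃ x, x = if a < i then a else a - 1 := ⟨_, rfl⟩
    have hki : (τ i).k = K - 1 := by rw [hK i hi, if_pos hiK]
    have h1 : c < (MSimplex.face i t').k := by
      rw [MSimplex.face_k, htk, if_pos (by omega), hc]; split_ifs <;> omega
    have h2 : b < m + 2 - (MSimplex.face i t').k := by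
      rw [MSimplex.face_k, htk, if_pos (by omega)]; omega
    have E := MSimplex.face_mat_pos i t' (by rw [htk]; omega) c b h1 h2
      (by rw [htk, hc]; split_ifs <;> omega) (by rw [htk]; omega)
    have E0 : (MSimplex.face i t').mat c b h1 h2 = (τ i).mat c b
        (by rw [hki, hc]; split_ifs <;> omega) (by rw [hki]; omega) :=
      MSimplex.mat_congr Hf c b h1 h2
    have T : t'.mat a b ha hb = t'.mat (if c < i then c else c + 1) b
        (by rw [htk, hc]; split_ifs <;> omega) (by rw [htk]; omega) :=
      MSimplex.mat_index_congr t' (by rw [hc]; split_ifs <;> omega) rfl _ _ _ _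
    refine T.trans (E.symm.trans (E0.trans ?_))
    refine Eq.trans ?_ (faceEntry_pos τ K hK i a b hi haK hbK pa pc hiK
      (by rw [hki]; split_ifs <;> omega) (by rw [hki]; omega)).symm
    exact MSimplex.mat_index_congr (τ i) hc rfl _ _ _ _
  · -- column face
    obtain ⟨d, hd⟩ : ∃ x, x = if b < i - K then b else b - 1 := ⟨_, rfl⟩
    have hki : (τ i).k = K := by rw [hK i hi, if_neg (by omega)]
    have h1 : a < (MSimplex.face i t').k := by
      rw [MSimplex.face_k, htk, if_neg (by omega)]; omega
    have h2 : d < m + 2 - (MSimplex.face i t').k := by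
      rw [MSimplex.face_k, htk, if_neg (by omega), hd]; split_ifs <;> omega
    have E := MSimplex.face_mat_neg i t' (by rw [htk]; omega) a d h1 h2
      (by rw [htk]; omega) (by rw [htk, hd]; split_ifs <;> omega)
    have E0 : (MSimplex.face i t').mat a d h1 h2 = (τ i).mat a d
        (by rw [hki]; omega) (by rw [hki, hd]; split_ifs <;> omega) :=
      MSimplex.mat_congr Hf a d h1 h2
    have T : t'.mat a b ha hb = t'.mat a (if d < i - t'.k then d else d + 1)
        (by rw [htk]; omega) (by rw [htk, hd]; split_ifs <;> omega) :=
      MSimplex.mat_index_congr t' rfl (by rw [htk, hd]; split_ifs <;> omega) _ _ _ _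
    refine T.trans (E.symm.trans (E0.trans ?_))
    refine Eq.trans ?_ (faceEntry_neg τ K hK i a b hi haK hbK pa pc (by omega)
      (by rw [hki]; omega) (by rw [hki]; split_ifs <;> omega)).symm
    exact MSimplex.mat_index_congr (τ i) rfl hd _ _ _ _
theorem exists_K {D : Type*} [Preorder D] {m : ℕ} (hm : 2 ≤ m) (τ : ℕ → MSimplex D (m + 1))
    (compat : ∀ i j : ℕ, i < j → j ≤ m + 2 →
      MSimplex.face i (τ j) = MSimplex.face (j - 1) (τ i)) :
    ∃ K, K ≤ m + 3 ∧ ∀ i ≤ m + 2, (τ i).k = if i < K then K - 1 else K := by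
  have hkk : ∀ i j, i < j → j ≤ m + 2 →
      (if i < (τ j).k then (τ j).k - 1 else (τ j).k)
        = (if j - 1 < (τ i).k then (τ i).k - 1 else (τ i).k) := by
    intro i j hij hj
    have h := congrArg MSimplex.k (compat i j hij hj)
    rw [MSimplex.face_k, MSimplex.face_k] at h
    rwa [show min i (m + 1) = i by omega, show min (j - 1) (m + 1) = j - 1 by omega] at h
  by_cases h0 : (τ 0).k = m + 2
  · refine ⟨m + 3, by omega, ?_⟩
    intro i hi
    rw [if_pos (by omega)]
    rcases Nat.eq_zero_or_pos i with rfl | hi0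
    · omega
    · have h := hkk 0 i hi0 hi
      have hb := (τ i).hk
      rw [h0] at h
      split_ifs at h <;> omega
  · refine ⟨(τ (m + 2)).k, by have := (τ (m + 2)).hk; omega, ?_⟩
    intro i hi
    have hb0 := (τ 0).hk
    have hbi := (τ i).hk
    have hbm := (τ (m + 2)).hk
    rcases Nat.lt_or_ge i (m + 2) with hi2 | hi2
    · have h2 := hkk 0 (m + 2) (by omega) (by omega)
      rcases Nat.eq_zero_or_pos i with rfl | hi0
      · split_ifs at h2 ⊢ <;> omega
      · have h1 := hkk i (m + 2) hi2 (by omega)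
        have h3 := hkk 0 i hi0 (by omega)
        split_ifs at h1 h2 h3 ⊢ <;> omega
    · have : i = m + 2 := by omega
      subst this
      split_ifs <;> omega

/-- `Mat(D)` is 3-coskeletal: for `n = m + 2 ≥ 4`, any compatible family
`τ_0, ..., τ_n` of `(n-1)`-simplices (satisfying `d_i τ_j = d_{j-1} τ_i` for
`i < j`) is the boundary of a unique `n`-simplex. -/
theorem mat_three_coskeletal (D : Type*) [PartialOrder D] (m : ℕ) (hm : 2 ≤ m)
    (τ : ℕ → MSimplex D (m + 1))
    (compat : ∀ i j : ℕ, i < j → j ≤ m + 2 →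
      MSimplex.face i (τ j) = MSimplex.face (j - 1) (τ i)) :
    ∃! t : MSimplex D (m + 2), ∀ i : ℕ, i ≤ m + 2 → MSimplex.face i t = τ i := by
  obtain ⟨K, hK3, hK⟩ := exists_K hm τ compat
  exact ⟨tfill hm τ K hK hK3 compat,
    fun i hi => tfill_face hm τ K hK hK3 compat i hi,
    fun t' ht' => tfill_unique hm τ K hK hK3 compat t' ht'⟩
end
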